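/- arXiv:2510.10966 — 12 statements merged into one kernel-verified Lean document; each statement's English description precedes it below -/
import Mathlib

section
/- Suppose the relative interior of conv(X) has nonempty intersection with { x ∈ ℝ^n : Ax ≥ b }. Then v^L = v̄* = v*, where v^L = sup_{λ≥0} inf_{x∈X}(c·x + λ·(b−Ax)), v̄* = inf{ c·x : Ax ≥ b, x ∈ closure(conv X) }, and v* = inf{ c·x : Ax ≥ b, x ∈ conv X }. -/
/-!
Weak duality gives `v^L ≤ v̄*`, and `v̄* ≤ v*` because `conv X ⊆ closure (conv X)`; the content is
`v* ≤ v^L`, the existence of nonnegative Lagrange multipliers under the relative-interior Slater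
condition, which we prove for any convex objective by induction on the number of constraints.

If some constraint `g k` is slack at a relatively interior feasible point, restrict the domain to
the half-space `g k ≥ 0`, where that point stays relatively interior, take multipliers for the other
constraints there, and find one for `g k` by a one-dimensional argument: if `h` is the objective
minus those multiples, convexity along a chord crossing `g k = 0` gives
`sup_{g k < 0} h / g k ≤ inf_{g k > 0} h / g k`. Otherwise every
constraint vanishes at every relatively interior feasible point; restrict to the hyperplane
`g k = 0`, where the multiplier of `g k` may come out negative. The induction hypothesis applied on
the affine hull of the domain to the objective `-g k` then plays the role of Farkas' lemma.
-/

open Set Filter Topology Matrix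

section IntrinsicInterior

variable {E : Type*} [NormedAddCommGroup E] [NormedSpace ℝ E] {C D : Set E} {x y : E}

theorem mem_intrinsicInterior_iff_mem_nhdsWithin :
    x ∈ intrinsicInterior ℝ C ↔ x ∈ affineSpan ℝ C ∧ C ∈ 𝓝[affineSpan ℝ C] x := by
  constructor
  · rintro ⟨x, hx, rfl⟩
    exact ⟨x.2, preimage_coe_mem_nhds_subtype.1 (mem_interior_iff_mem_nhds.1 hx)⟩
  · rintro ⟨hx, hC⟩
    exact ⟨⟨x, hx⟩, mem_interior_iff_mem_nhds.2 (preimage_coe_mem_nhds_subtype.2 hC), rfl⟩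

theorem AffineSubspace.mem_intrinsicInterior_coe {S : AffineSubspace ℝ E} (hx : x ∈ S) :
    x ∈ intrinsicInterior ℝ (S : Set E) := by
  rw [mem_intrinsicInterior_iff_mem_nhdsWithin, AffineSubspace.affineSpan_coe]
  exact ⟨hx, self_mem_nhdsWithin⟩

theorem mem_intrinsicInterior_inter (hx : x ∈ intrinsicInterior ℝ C) (hxD : x ∈ D)
    (hD : D ∈ 𝓝[affineSpan ℝ (C ∩ D)] x) : x ∈ intrinsicInterior ℝ (C ∩ D) := by
  have hC := (mem_intrinsicInterior_iff_mem_nhdsWithin.1 hx).2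
  refine mem_intrinsicInterior_iff_mem_nhdsWithin.2
    ⟨subset_affineSpan ℝ _ ⟨intrinsicInterior_subset hx, hxD⟩, inter_mem ?_ hD⟩
  exact nhdsWithin_mono _ (affineSpan_mono ℝ inter_subset_left) hC

theorem mem_intrinsicInterior_inter_hyperplane (hx : x ∈ intrinsicInterior ℝ C)
    {g : E →ᵃ[ℝ] ℝ} (hgx : g x = 0) : x ∈ intrinsicInterior ℝ (C ∩ {y | g y = 0}) := by
  refine mem_intrinsicInterior_inter hx hgx (mem_of_superset self_mem_nhdsWithin fun y hy => ?_)
  have : affineSpan ℝ (C ∩ {y | g y = 0}) ≤ .comap g (⊥ : Submodule ℝ ℝ).toAffineSubspace :=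
    affineSpan_le.2 fun y hy => by simpa [Submodule.mem_toAffineSubspace] using hy.2
  simpa [Submodule.mem_toAffineSubspace] using this hy

theorem eventually_lineMap_mem_intrinsicInterior (hx : x ∈ intrinsicInterior ℝ C)
    (hy : y ∈ affineSpan ℝ C) :
    ∀ᶠ t in 𝓝 (0 : ℝ), AffineMap.lineMap x y t ∈ intrinsicInterior ℝ C := by
  obtain ⟨x, hx, rfl⟩ := hx
  let p : ℝ → affineSpan ℝ C := fun t => ⟨AffineMap.lineMap (x : E) y t,
    AffineMap.lineMap_mem _ x.2 hy⟩
  have hp : Continuous p := AffineMap.lineMap_continuous.subtype_mk _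
  have hp0 : p 0 = x := by ext; simp [p]
  filter_upwards [hp.continuousAt.preimage_mem_nhds (hp0 ▸ isOpen_interior.mem_nhds hx)] with t ht
  exact ⟨p t, ht, rfl⟩

theorem AffineMap.eq_zero_of_nonneg_of_mem_intrinsicInterior (g : E →ᵃ[ℝ] ℝ)
    (hx : x ∈ intrinsicInterior ℝ C) (hgx : g x = 0) (hg : ∀ z ∈ C, 0 ≤ g z) (hy : y ∈ C) :
    g y = 0 := by
  obtain ⟨t, htC, ht⟩ := ((eventually_lineMap_mem_intrinsicInterior hx
    (subset_affineSpan ℝ C hy)).filter_mono nhdsWithin_le_nhds |>.and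
      (self_mem_nhdsWithin : Iio (0 : ℝ) ∈ 𝓝[<] 0)).exists
  have := hg _ (intrinsicInterior_subset htC)
  rw [g.apply_lineMap, hgx, AffineMap.lineMap_apply_ring'] at this
  nlinarith [hg y hy, show t < 0 from ht]

theorem AffineMap.nonpos_of_mem_affineSpan_inter (a : E →ᵃ[ℝ] ℝ) {K : Set E} (hK : Convex ℝ K)
    (hx : x ∈ intrinsicInterior ℝ C) (hxK : x ∈ K) (hax : 0 ≤ a x)
    (ha : ∀ z ∈ intrinsicInterior ℝ C, z ∈ K → a z ≤ 0) (hy : y ∈ affineSpan ℝ C) (hyK : y ∈ K) :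
    a y ≤ 0 := by
  obtain ⟨t, htC, ht₀, ht₁⟩ := ((eventually_lineMap_mem_intrinsicInterior hx hy).filter_mono
    nhdsWithin_le_nhds |>.and (Ioo_mem_nhdsGT one_pos)).exists
  have := ha _ htC (hK.lineMap_mem hxK hyK ⟨ht₀.le, ht₁.le⟩)
  rw [a.apply_lineMap, AffineMap.lineMap_apply_ring] at this
  nlinarith [mul_nonneg (sub_nonneg.2 ht₁.le) hax]

variable [FiniteDimensional ℝ E]

theorem mem_intrinsicInterior_inter_halfSpace (hx : x ∈ intrinsicInterior ℝ C)
    {g : E →ᵃ[ℝ] ℝ} (hgx : 0 < g x) : x ∈ intrinsicInterior ℝ (C ∩ {y | 0 ≤ g y}) := by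
  refine mem_intrinsicInterior_inter hx hgx.le (mem_nhdsWithin_of_mem_nhds ?_)
  exact mem_of_superset
    ((g.continuous_of_finiteDimensional.isOpen_preimage _ isOpen_Ioi).mem_nhds hgx)
    fun y (hy : 0 < g y) => hy.le

end IntrinsicInterior

section Multipliers

variable {E ι : Type*} [NormedAddCommGroup E] [NormedSpace ℝ E] {C : Set E} {x y : E}
  {f h : E → ℝ}

theorem AffineMap.convexOn (a : E →ᵃ[ℝ] ℝ) (hC : Convex ℝ C) : ConvexOn ℝ C a :=
  ⟨hC, fun _ _ _ _ _ _ _ _ hpq => (Convex.combo_affine_apply hpq).le⟩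

theorem ConvexOn.sub_sum_mul (hf : ConvexOn ℝ C f) (g : ι → E →ᵃ[ℝ] ℝ) (s : Finset ι)
    (μ : ι → ℝ) : ConvexOn ℝ C (fun x => f x - ∑ j ∈ s, μ j * g j x) := by
  refine ⟨hf.1, fun x hx y hy p q hp hq hpq => ?_⟩
  have hsum : ∑ j ∈ s, μ j * g j (p • x + q • y) =
      p * ∑ j ∈ s, μ j * g j x + q * ∑ j ∈ s, μ j * g j y := by
    simp only [Convex.combo_affine_apply hpq, smul_eq_mul, Finset.mul_sum,
      ← Finset.sum_add_distrib]
    exact Finset.sum_congr rfl fun j _ => by ring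
  have := hf.2 hx hy hp hq hpq
  simp only [smul_eq_mul] at this ⊢
  rw [hsum]
  linarith

theorem ConvexOn.div_le_div_of_neg_of_pos (hh : ConvexOn ℝ C h) (g : E →ᵃ[ℝ] ℝ)
    (hzero : ∀ x ∈ C, g x = 0 → 0 ≤ h x) (hx : x ∈ C) (hy : y ∈ C) (hgx : g x < 0)
    (hgy : 0 < g y) : h x / g x ≤ h y / g y := by
  have hd : 0 < g y - g x := by linarith
  obtain ⟨θ, hθ⟩ : ∃ θ, θ = g y / (g y - g x) := ⟨_, rfl⟩
  have hθd : θ * (g y - g x) = g y := by rw [hθ, div_mul_cancel₀ _ hd.ne']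
  have hθ0 : 0 ≤ θ := hθ ▸ by positivity
  have hθ1 : 0 ≤ 1 - θ := by nlinarith
  have hθθ : θ + (1 - θ) = 1 := by ring
  have hg0 : g (θ • x + (1 - θ) • y) = 0 := by
    rw [Convex.combo_affine_apply hθθ, smul_eq_mul, smul_eq_mul]; linarith
  have key := (hzero _ (hh.1 hx hy hθ0 hθ1 hθθ) hg0).trans (hh.2 hx hy hθ0 hθ1 hθθ)
  rw [smul_eq_mul, smul_eq_mul] at key
  have hexp : (θ * h x + (1 - θ) * h y) * (g y - g x) = h x * g y - h y * g x := by
    linear_combination (h x - h y) * hθd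
  rw [div_le_iff_of_neg hgx, div_mul_eq_mul_div, div_le_iff₀ hgy]
  linarith [hexp ▸ mul_nonneg key hd.le]

theorem ConvexOn.exists_mul_le_of_neg_of_pos (hh : ConvexOn ℝ C h) (g : E →ᵃ[ℝ] ℝ)
    (hzero : ∀ x ∈ C, g x = 0 → 0 ≤ h x) (hneg : ∃ x ∈ C, g x < 0) (hpos : ∃ x ∈ C, 0 < g x) :
    ∃ ν : ℝ, ∀ x ∈ C, ν * g x ≤ h x := by
  obtain ⟨x₁, hx₁, hg₁⟩ := hneg
  obtain ⟨x₂, hx₂, hg₂⟩ := hpos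
  set R := (fun x => h x / g x) '' {x ∈ C | g x < 0}
  have hR : ∀ y ∈ C, 0 < g y → ∀ r ∈ R, r ≤ h y / g y := by
    rintro y hy hgy _ ⟨x, ⟨hx, hgx⟩, rfl⟩
    exact hh.div_le_div_of_neg_of_pos g hzero hx hy hgx hgy
  refine ⟨sSup R, fun x hx => ?_⟩
  rcases lt_trichotomy (g x) 0 with hgx | hgx | hgx
  · have := le_csSup ⟨_, hR x₂ hx₂ hg₂⟩ (mem_image_of_mem _ ⟨hx, hgx⟩)
    rwa [div_le_iff_of_neg hgx] at this
  · simpa [hgx] using hzero x hx hgx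
  · exact (le_div_iff₀ hgx).1 (csSup_le ⟨_, mem_image_of_mem _ ⟨hx₁, hg₁⟩⟩ (hR x hx hgx))

theorem ConvexOn.exists_nonneg_mul_le (hh : ConvexOn ℝ C h) (g : E →ᵃ[ℝ] ℝ)
    (hnonneg : ∀ x ∈ C, 0 ≤ g x → 0 ≤ h x) (hpos : ∃ x ∈ C, 0 < g x) :
    ∃ ν, 0 ≤ ν ∧ ∀ x ∈ C, ν * g x ≤ h x := by
  by_cases hneg : ∃ x ∈ C, g x < 0
  · obtain ⟨ν, hν⟩ := hh.exists_mul_le_of_neg_of_pos g (fun x hx hgx => hnonneg x hx hgx.ge)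
      hneg hpos
    refine ⟨max ν 0, le_max_right _ _, fun x hx => ?_⟩
    rcases le_or_gt 0 (g x) with hgx | hgx
    · rcases max_cases ν 0 with ⟨hmax, -⟩ | ⟨hmax, -⟩ <;> rw [hmax]
      · exact hν x hx
      · simpa using hnonneg x hx hgx
    · exact (mul_le_mul_of_nonpos_right (le_max_left ν 0) hgx.le).trans (hν x hx)
  · push Not at hneg
    exact ⟨0, le_rfl, fun x hx => by simpa using hnonneg x hx (hneg x hx)⟩

theorem ConvexOn.exists_mul_le_of_mem_intrinsicInterior (hh : ConvexOn ℝ C h) (g : E →ᵃ[ℝ] ℝ)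
    (hx : x ∈ intrinsicInterior ℝ C) (hgx : g x = 0) (hzero : ∀ x ∈ C, g x = 0 → 0 ≤ h x) :
    ∃ ν : ℝ, ∀ x ∈ C, ν * g x ≤ h x := by
  by_cases hsign : (∃ x ∈ C, g x < 0) ∧ ∃ x ∈ C, 0 < g x
  · exact hh.exists_mul_le_of_neg_of_pos g hzero hsign.1 hsign.2
  refine ⟨0, fun y hy => ?_⟩
  suffices g y = 0 by simpa using hzero y hy this
  rw [not_and_or] at hsign
  push Not at hsign
  rcases hsign with hg | hg
  · exact g.eq_zero_of_nonneg_of_mem_intrinsicInterior hx hgx hg hy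
  · simpa using (-g).eq_zero_of_nonneg_of_mem_intrinsicInterior hx (by simp [hgx])
      (fun z hz => by simpa using hg z hz) hy

theorem Finset.forall_mem_of_forall_mem_erase {α : Type*} [DecidableEq α] {s : Finset α} {a : α}
    {p : α → Prop} (ha : p a) (h : ∀ b ∈ s.erase a, p b) : ∀ b ∈ s, p b := fun b hb => by
  rcases eq_or_ne b a with rfl | hba
  exacts [ha, h b (mem_erase.2 ⟨hba, hb⟩)]

theorem exists_nonneg_sum_mul_le_of_erase [DecidableEq ι] (g : ι → E →ᵃ[ℝ] ℝ) {s : Finset ι}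
    {k : ι} (hk : k ∈ s) {μ : ι → ℝ} (hμ : 0 ≤ μ) {ν : ℝ} (hν : 0 ≤ ν)
    (hle : ∀ x ∈ C, ν * g k x ≤ f x - ∑ j ∈ s.erase k, μ j * g j x) :
    ∃ μ : ι → ℝ, 0 ≤ μ ∧ ∀ x ∈ C, ∑ j ∈ s, μ j * g j x ≤ f x := by
  refine ⟨Function.update μ k ν, fun j => ?_, fun x hx => ?_⟩
  · rcases eq_or_ne j k with rfl | hj
    · simpa using hν
    · simpa [hj] using hμ j
  rw [← Finset.add_sum_erase _ _ hk, Function.update_self,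
    Finset.sum_congr rfl fun j hj => by rw [Function.update_of_ne (Finset.ne_of_mem_erase hj)]]
  linarith [hle x hx]

variable (E) in
def AdmitsLagrangeMultipliers (g : ι → E →ᵃ[ℝ] ℝ) (s : Finset ι) : Prop :=
  ∀ ⦃C : Set E⦄ ⦃f : E → ℝ⦄, ConvexOn ℝ C f → ∀ ⦃x₀ : E⦄, x₀ ∈ intrinsicInterior ℝ C →
    (∀ j ∈ s, 0 ≤ g j x₀) → (∀ x ∈ C, (∀ j ∈ s, 0 ≤ g j x) → 0 ≤ f x) →
    ∃ μ : ι → ℝ, 0 ≤ μ ∧ ∀ x ∈ C, ∑ j ∈ s, μ j * g j x ≤ f x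

section Induction

variable [DecidableEq ι] {g : ι → E →ᵃ[ℝ] ℝ} {s : Finset ι} {k : ι}

theorem AdmitsLagrangeMultipliers.of_erase_of_slack [FiniteDimensional ℝ E]
    (ih : AdmitsLagrangeMultipliers E g (s.erase k)) (hk : k ∈ s) (hf : ConvexOn ℝ C f)
    (hy : y ∈ intrinsicInterior ℝ C) (hys : ∀ j ∈ s, 0 ≤ g j y) (hyk : 0 < g k y)
    (hfs : ∀ x ∈ C, (∀ j ∈ s, 0 ≤ g j x) → 0 ≤ f x) :
    ∃ μ : ι → ℝ, 0 ≤ μ ∧ ∀ x ∈ C, ∑ j ∈ s, μ j * g j x ≤ f x := by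
  obtain ⟨μ, hμ, hμC⟩ := ih
    (hf.subset inter_subset_left (hf.1.inter ((convex_Ici 0).affine_preimage (g k))))
    (mem_intrinsicInterior_inter_halfSpace hy hyk)
    (fun j hj => hys j (Finset.mem_of_mem_erase hj))
    fun x hx hxs => hfs x hx.1 (Finset.forall_mem_of_forall_mem_erase hx.2 hxs)
  obtain ⟨ν, hν, hνC⟩ := (hf.sub_sum_mul g (s.erase k) μ).exists_nonneg_mul_le (g k)
    (fun x hx hgx => sub_nonneg.2 (hμC x ⟨hx, hgx⟩)) ⟨y, intrinsicInterior_subset hy, hyk⟩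
  exact exists_nonneg_sum_mul_le_of_erase g hk hμ hν hνC

theorem AdmitsLagrangeMultipliers.of_erase_of_tight
    (ih : AdmitsLagrangeMultipliers E g (s.erase k)) (hk : k ∈ s) (hf : ConvexOn ℝ C f)
    {x₀ : E} (hx₀ : x₀ ∈ intrinsicInterior ℝ C) (hx₀s : ∀ j ∈ s, 0 ≤ g j x₀)
    (htight : ∀ y ∈ intrinsicInterior ℝ C, (∀ j ∈ s, 0 ≤ g j y) → g k y ≤ 0)
    (hfs : ∀ x ∈ C, (∀ j ∈ s, 0 ≤ g j x) → 0 ≤ f x) :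
    ∃ μ : ι → ℝ, 0 ≤ μ ∧ ∀ x ∈ C, ∑ j ∈ s, μ j * g j x ≤ f x := by
  have hk₀ : g k x₀ = 0 := le_antisymm (htight x₀ hx₀ hx₀s) (hx₀s k hk)
  have hx₀s' : ∀ j ∈ s.erase k, 0 ≤ g j x₀ := fun j hj => hx₀s j (Finset.mem_of_mem_erase hj)
  obtain ⟨μ, hμ, hμC⟩ := ih
    (hf.subset inter_subset_left (hf.1.inter ((convex_singleton 0).affine_preimage (g k))))
    (mem_intrinsicInterior_inter_hyperplane hx₀ hk₀) hx₀s'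
    fun x hx hxs => hfs x hx.1 (Finset.forall_mem_of_forall_mem_erase hx.2.ge hxs)
  obtain ⟨ν, hνC⟩ := (hf.sub_sum_mul g (s.erase k) μ).exists_mul_le_of_mem_intrinsicInterior
    (g k) hx₀ hk₀ fun x hx hgx => sub_nonneg.2 (hμC x ⟨hx, hgx⟩)
  rcases le_or_gt 0 ν with hν | hν
  · exact exists_nonneg_sum_mul_le_of_erase g hk hμ hν hνC
  -- A negative multiplier of `g k` is absorbed by the others: on `affineSpan ℝ C`, where `-g k` is
  -- nonnegative under the remaining constraints, the induction hypothesis gives `g k ≤ -∑ ρ j g j`.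
  have hK : Convex ℝ {x | ∀ j ∈ s, 0 ≤ g j x} := by
    rw [show {x | ∀ j ∈ s, 0 ≤ g j x} = ⋂ j ∈ s, g j ⁻¹' Ici 0 by ext; simp]
    exact convex_iInter₂ fun j _ => (convex_Ici 0).affine_preimage (g j)
  have hx₀L := subset_affineSpan ℝ C (intrinsicInterior_subset hx₀)
  obtain ⟨ρ, hρ, hρC⟩ := ih ((-g k).convexOn (affineSpan ℝ C).convex)
    (AffineSubspace.mem_intrinsicInterior_coe hx₀L) hx₀s' fun y hy hys => by
      by_contra! hpos
      simp only [AffineMap.coe_neg, Pi.neg_apply, neg_neg_iff_pos] at hpos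
      have := (g k).nonpos_of_mem_affineSpan_inter hK hx₀ hx₀s (hx₀s k hk) htight hy
        (Finset.forall_mem_of_forall_mem_erase hpos.le hys)
      linarith
  refine exists_nonneg_sum_mul_le_of_erase g hk (μ := μ + (-ν) • ρ)
    (add_nonneg hμ (smul_nonneg (neg_nonneg.2 hν.le) hρ)) le_rfl fun x hx => ?_
  have hρx := hρC x (subset_affineSpan ℝ C hx)
  simp only [AffineMap.coe_neg, Pi.neg_apply] at hρx
  have := mul_le_mul_of_nonneg_left hρx (neg_nonneg.2 hν.le)
  simp only [Pi.add_apply, Pi.smul_apply, smul_eq_mul, add_mul, Finset.sum_add_distrib, mul_assoc,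
    ← Finset.mul_sum]
  linarith [hνC x hx]

end Induction

theorem admitsLagrangeMultipliers [FiniteDimensional ℝ E] (g : ι → E →ᵃ[ℝ] ℝ) (s : Finset ι) :
    AdmitsLagrangeMultipliers E g s := by
  classical
  induction s using Finset.strongInduction with
  | H s ih =>
  intro C f hf x₀ hx₀ hx₀s hfs
  rcases s.eq_empty_or_nonempty with rfl | ⟨k, hk⟩
  · exact ⟨0, le_rfl, fun x hx => by simpa using hfs x hx (by simp)⟩
  have ih' {k : ι} (hk : k ∈ s) := ih (s.erase k) (s.erase_ssubset hk)
  by_cases hslack : ∃ k ∈ s, ∃ y ∈ intrinsicInterior ℝ C, (∀ j ∈ s, 0 ≤ g j y) ∧ 0 < g k y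
  · obtain ⟨k, hk, y, hy, hys, hyk⟩ := hslack
    exact (ih' hk).of_erase_of_slack hk hf hy hys hyk hfs
  · push Not at hslack
    exact (ih' hk).of_erase_of_tight hk hf hx₀ hx₀s (hslack k hk) hfs

end Multipliers

theorem EReal.coe_le_sInf_image_coe {α : Type*} {S : Set α} {φ : α → ℝ} {r : ℝ} :
    (r : EReal) ≤ sInf ((fun x => (φ x : EReal)) '' S) ↔ ∀ x ∈ S, r ≤ φ x := by
  simp [le_sInf_iff]

section Geoffrion

variable {m n : ℕ} (A : Matrix (Fin m) (Fin n) ℝ) (b : Fin m → ℝ) (c : Fin n → ℝ)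
  {X : Set (Fin n → ℝ)}

theorem lagrangianDual_le_of_mem_closure {lam : Fin m → ℝ} (hlam : 0 ≤ lam) {y : Fin n → ℝ}
    (hy : y ∈ closure (convexHull ℝ X)) (hyb : b ≤ A *ᵥ y) :
    sInf ((fun x => ((c ⬝ᵥ x + lam ⬝ᵥ (b - A *ᵥ x) : ℝ) : EReal)) '' X) ≤
      ((c ⬝ᵥ y : ℝ) : EReal) := by
  refine EReal.ge_of_forall_gt_iff_ge.1 fun r hr => ?_
  let L : (Fin n → ℝ) →ᵃ[ℝ] ℝ := (dotProductBilin ℝ ℝ c).toAffineMap +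
    (dotProductBilin ℝ ℝ lam).toAffineMap.comp (.const ℝ _ b - A.mulVecLin.toAffineMap)
  have hXL : X ⊆ L ⁻¹' Ici r := fun x hx => by
    simpa [L] using EReal.coe_le_sInf_image_coe.1 hr.le x hx
  have hyL : r ≤ L y := closure_minimal (convexHull_min hXL ((convex_Ici r).affine_preimage L))
    (isClosed_Ici.preimage L.continuous_of_finiteDimensional) hy
  have hpen : lam ⬝ᵥ (b - A *ᵥ y) ≤ 0 :=
    Finset.sum_nonpos fun i _ => mul_nonpos_of_nonneg_of_nonpos (hlam i) (sub_nonpos.2 (hyb i))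
  have hLy : L y = c ⬝ᵥ y + lam ⬝ᵥ (b - A *ᵥ y) := by simp [L]
  exact_mod_cast (hyL.trans_eq hLy).trans (by linarith)

theorem exists_le_lagrangian_of_slater {x₀ : Fin n → ℝ}
    (hx₀ : x₀ ∈ intrinsicInterior ℝ (convexHull ℝ X)) (hx₀b : b ≤ A *ᵥ x₀) {r : ℝ}
    (hr : ∀ x ∈ {x ∈ convexHull ℝ X | b ≤ A *ᵥ x}, r ≤ c ⬝ᵥ x) :
    ∃ lam : Fin m → ℝ, 0 ≤ lam ∧ ∀ x ∈ X, r ≤ c ⬝ᵥ x + lam ⬝ᵥ (b - A *ᵥ x) := by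
  let g : Fin m → (Fin n → ℝ) →ᵃ[ℝ] ℝ := fun j =>
    ((LinearMap.proj j).comp A.mulVecLin).toAffineMap - .const ℝ _ (b j)
  have hg : ∀ j x, g j x = (A *ᵥ x - b) j := by simp [g]
  let f : (Fin n → ℝ) →ᵃ[ℝ] ℝ := (dotProductBilin ℝ ℝ c).toAffineMap - .const ℝ _ r
  have hf : ∀ x, f x = c ⬝ᵥ x - r := by simp [f]
  obtain ⟨lam, hlam, hle⟩ := admitsLagrangeMultipliers g Finset.univ
    (f.convexOn (convex_convexHull ℝ X)) hx₀ (fun j _ => by simpa [hg] using hx₀b j)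
    fun x hx hxs => by
      simpa [hf] using hr x ⟨hx, fun j => by simpa [hg] using hxs j (Finset.mem_univ j)⟩
  refine ⟨lam, hlam, fun x hx => ?_⟩
  have hlag : ∑ j, lam j * g j x = -(lam ⬝ᵥ (b - A *ᵥ x)) := by
    simp only [hg, ← dotProduct_neg, neg_sub]
    rfl
  linarith [hf x, hle x (subset_convexHull ℝ X hx)]

end Geoffrion

theorem eq_and_eq_of_le_of_le_of_le {α : Type*} [PartialOrder α] {a b c : α} (hab : a ≤ b)
    (hbc : b ≤ c) (hca : c ≤ a) : a = b ∧ b = c :=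
  ⟨le_antisymm hab (hbc.trans hca), le_antisymm hbc (hca.trans hab)⟩

theorem geoffrion_slater_general {m n : ℕ} (A : Matrix (Fin m) (Fin n) ℝ)
    (b : Fin m → ℝ) (c : Fin n → ℝ) (X : Set (Fin n → ℝ))
    (hslater : (intrinsicInterior ℝ (convexHull ℝ X) ∩
      {x : Fin n → ℝ | b ≤ A.mulVec x}).Nonempty) :
    sSup ((fun lam =>
        sInf ((fun x => ((c ⬝ᵥ x + lam ⬝ᵥ (b - A.mulVec x) : ℝ) : EReal)) '' X)) ''
          {lam : Fin m → ℝ | 0 ≤ lam}) =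
      sInf ((fun x => ((c ⬝ᵥ x : ℝ) : EReal)) ''
        {x ∈ closure (convexHull ℝ X) | b ≤ A.mulVec x}) ∧
    sInf ((fun x => ((c ⬝ᵥ x : ℝ) : EReal)) ''
        {x ∈ closure (convexHull ℝ X) | b ≤ A.mulVec x}) =
      sInf ((fun x => ((c ⬝ᵥ x : ℝ) : EReal)) ''
        {x ∈ convexHull ℝ X | b ≤ A.mulVec x}) := by
  obtain ⟨x₀, hx₀, hx₀b⟩ := hslater
  refine eq_and_eq_of_le_of_le_of_le ?_ ?_ ?_
  · exact sSup_le <| forall_mem_image.2 fun lam hlam => le_sInf <| forall_mem_image.2 fun y hy =>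
      lagrangianDual_le_of_mem_closure A b c hlam hy.1 hy.2
  · exact sInf_le_sInf <| image_mono fun x hx => ⟨subset_closure hx.1, hx.2⟩
  · refine EReal.ge_of_forall_gt_iff_ge.1 fun r hr => ?_
    obtain ⟨lam, hlam, hX⟩ :=
      exists_le_lagrangian_of_slater A b c hx₀ hx₀b (EReal.coe_le_sInf_image_coe.1 hr.le)
    exact (EReal.coe_le_sInf_image_coe.2 hX).trans (le_sSup (mem_image_of_mem _ hlam))

theorem geoffrion_slater {m n : ℕ} (A : Matrix (Fin m) (Fin n) ℝ)
    (b : Fin m → ℝ) (c : Fin n → ℝ) (X : Set (Fin n → ℝ)) (hX : X.Nonempty)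
    (hslater : (intrinsicInterior ℝ (convexHull ℝ X) ∩
      {x : Fin n → ℝ | b ≤ A.mulVec x}).Nonempty) :
    sSup ((fun lam =>
        sInf ((fun x => ((c ⬝ᵥ x + lam ⬝ᵥ (b - A.mulVec x) : ℝ) : EReal)) '' X)) ''
          {lam : Fin m → ℝ | 0 ≤ lam}) =
      sInf ((fun x => ((c ⬝ᵥ x : ℝ) : EReal)) ''
        {x ∈ closure (convexHull ℝ X) | b ≤ A.mulVec x}) ∧
    sInf ((fun x => ((c ⬝ᵥ x : ℝ) : EReal)) ''
        {x ∈ closure (convexHull ℝ X) | b ≤ A.mulVec x}) =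
      sInf ((fun x => ((c ⬝ᵥ x : ℝ) : EReal)) ''
        {x ∈ convexHull ℝ X | b ≤ A.mulVec x}) :=
  geoffrion_slater_general A b c X hslater
end

section
/- Let X = { (x,y) ∈ ℤ₊² : y ≤ √2·x }. Then for every λ ≥ 0, inf { −x + λ(√2·x − y) : (x,y) ∈ X } = −∞; hence the Lagrangian dual bound v^L for the program minimize −x subject to −√2·x + y ≥ 0, (x,y) ∈ X, equals −∞. -/
theorem example1_dual_unbounded
    (X : Set (ℝ × ℝ))
    (hX : X = {p : ℝ × ℝ | (∃ a b : ℤ, 0 ≤ a ∧ 0 ≤ b ∧ p = ((a : ℝ), (b : ℝ))) ∧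
      p.2 ≤ Real.sqrt 2 * p.1}) :
    (∀ lam : ℝ, 0 ≤ lam →
      sInf ((fun p : ℝ × ℝ =>
        ((-p.1 + lam * (Real.sqrt 2 * p.1 - p.2) : ℝ) : EReal)) '' X) = ⊥) ∧
    sSup ((fun lam : ℝ =>
        sInf ((fun p : ℝ × ℝ =>
          ((-p.1 + lam * (Real.sqrt 2 * p.1 - p.2) : ℝ) : EReal)) '' X)) ''
        {lam : ℝ | 0 ≤ lam}) = ⊥ := by
  have key : ∀ lam : ℝ, 0 ≤ lam →
      sInf ((fun p : ℝ × ℝ =>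
        ((-p.1 + lam * (Real.sqrt 2 * p.1 - p.2) : ℝ) : EReal)) '' X) = ⊥ := by
    intro lam hlam
    have helper : ∀ r : ℝ, ∃ a ∈ ((fun p : ℝ × ℝ =>
        ((-p.1 + lam * (Real.sqrt 2 * p.1 - p.2) : ℝ) : EReal)) '' X),
        a < (r : EReal) := by
      intro r
      obtain ⟨n, hn⟩ := exists_nat_gt (lam - r)
      set x : ℝ := (n : ℝ) with hx
      have hx0 : 0 ≤ Real.sqrt 2 * x := by positivity
      set p : ℝ × ℝ := (x, ((⌊Real.sqrt 2 * x⌋ : ℤ) : ℝ)) with hp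
      have hmem : p ∈ X := by
        rw [hX]
        refine ⟨⟨(n : ℤ), ⌊Real.sqrt 2 * x⌋, Int.ofNat_nonneg n,
          Int.floor_nonneg.mpr hx0, by simp [hp, hx]⟩, ?_⟩
        exact Int.floor_le _
      refine ⟨_, Set.mem_image_of_mem _ hmem, ?_⟩
      rw [EReal.coe_lt_coe_iff]
      have hfr : Real.sqrt 2 * x - ((⌊Real.sqrt 2 * x⌋ : ℤ) : ℝ) < 1 := by
        have := Int.lt_floor_add_one (Real.sqrt 2 * x)
        linarith
      have hfr0 : 0 ≤ Real.sqrt 2 * x - ((⌊Real.sqrt 2 * x⌋ : ℤ) : ℝ) := by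
        have := Int.floor_le (Real.sqrt 2 * x)
        linarith
      have hmul : lam * (Real.sqrt 2 * x - ((⌊Real.sqrt 2 * x⌋ : ℤ) : ℝ)) ≤ lam := by
        nlinarith
      simp only [hp]
      
      linarith
    rw [sInf_eq_bot]
    intro b hb
    induction b using EReal.rec with
    | bot => exact absurd hb (lt_irrefl _)
    | top =>
        obtain ⟨a, ha, hlt⟩ := helper 0
        exact ⟨a, ha, lt_of_lt_of_le hlt le_top⟩
    | coe r => exact helper r
  refine ⟨key, ?_⟩
  have himg : ((fun lam : ℝ =>
      sInf ((fun p : ℝ × ℝ =>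
        ((-p.1 + lam * (Real.sqrt 2 * p.1 - p.2) : ℝ) : EReal)) '' X)) ''
      {lam : ℝ | 0 ≤ lam}) = {⊥} := by
    apply Set.eq_singleton_iff_nonempty_unique_mem.mpr
    constructor
    · exact ⟨_, ⟨0, by simp, key 0 le_rfl⟩⟩
    · rintro x ⟨lam, hlam, rfl⟩
      exact key lam hlam
  rw [himg, sSup_singleton]
end

section
/- Let X = { (x,y) ∈ ℤ₊² : y ≤ √2·x }. Then conv(X) = { (x,y) ∈ ℝ₊² : y ≤ √2·x } \ { (x,y) : y = √2·x, x > 0 }; that is, the convex hull of X consists of the origin together with all points of the nonnegative quadrant strictly below the line y = √2·x. -/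
/-! For irrational `α ≥ 0`, the cone `0 ≤ y < α x` with the origin added is convex and contains
every lattice point of the quadrant below the line `y = α x`: a lattice point on that line other
than the origin would make `α` rational. Conversely, a point with `0 ≤ y < α x` lies in the
triangle with vertices `0`, `(N, 0)`, `(N, ⌊α N⌋)` once `N` is large, because the slope
`⌊α N⌋ / N` tends to `α`. -/

theorem ConvexCone.convex_insert_zero {R M : Type*} [Semiring R] [PartialOrder R]
    [AddCommMonoid M] [Module R M] (C : ConvexCone R M) : Convex R (insert 0 (C : Set M)) := by
  refine convex_iff_forall_pos.2 ?_
  rintro x (rfl | hx) y (rfl | hy) a b ha hb hab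
  · simp
  · simpa using .inr (C.smul_mem hb hy)
  · simpa using .inr (C.smul_mem ha hx)
  · exact .inr (C.convex hx hy ha.le hb.le hab)

def latticePointsBelow (α : ℝ) : Set (ℝ × ℝ) :=
  {p | (∃ a b : ℤ, 0 ≤ a ∧ 0 ≤ b ∧ p = ((a : ℝ), (b : ℝ))) ∧ p.2 ≤ α * p.1}

def sectorBelow (α : ℝ) : ConvexCone ℝ (ℝ × ℝ) where
  carrier := {p | 0 ≤ p.2 ∧ p.2 < α * p.1}
  smul_mem' c hc p hp := by
    obtain ⟨hp₀, hp₁⟩ := hp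
    refine ⟨by simpa using mul_nonneg hc.le hp₀, ?_⟩
    simpa [mul_left_comm α c] using mul_lt_mul_of_pos_left hp₁ hc
  add_mem' p hp q hq := ⟨add_nonneg hp.1 hq.1, by
    simp only [Prod.snd_add, Prod.fst_add]; linarith [hp.2, hq.2]⟩

variable {α : ℝ}

lemma mem_sectorBelow {p : ℝ × ℝ} : p ∈ sectorBelow α ↔ 0 ≤ p.2 ∧ p.2 < α * p.1 := .rfl

lemma natCast_mem_latticePointsBelow {a b : ℕ} (h : (b : ℝ) ≤ α * a) :
    ((a : ℝ), (b : ℝ)) ∈ latticePointsBelow α :=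
  ⟨⟨a, b, by positivity, by positivity, by simp⟩, h⟩

lemma zero_mem_latticePointsBelow : (0 : ℝ × ℝ) ∈ latticePointsBelow α :=
  ⟨⟨0, 0, le_rfl, le_rfl, by ext <;> simp⟩, by simp⟩

lemma latticePointsBelow_subset (hα : Irrational α) :
    latticePointsBelow α ⊆ insert 0 (sectorBelow α : Set (ℝ × ℝ)) := by
  rintro _ ⟨⟨a, b, ha, hb, rfl⟩, hle⟩
  obtain hlt | heq := hle.lt_or_eq
  · exact .inr ⟨by simpa using hb, hlt⟩
  have ha₀ : a = 0 := by
    by_contra ha₀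
    exact (hα.mul_intCast ha₀).ne_int b heq.symm
  subst ha₀
  have hb₀ : b = 0 := by exact_mod_cast (by simpa using heq : (b : ℝ) = 0)
  simp [hb₀]

lemma exists_nat_slope_between (hα : 0 ≤ α) {x y : ℝ} (hx : 0 < x) (hy : y < α * x) :
    ∃ N m : ℕ, x ≤ N ∧ (m : ℝ) ≤ α * N ∧ y * N ≤ x * m := by
  obtain ⟨N, hN⟩ := exists_nat_ge (max x (x / (α * x - y)))
  have hxN : x ≤ N := (le_max_left _ _).trans hN
  have hgap : x ≤ N * (α * x - y) := by
    rw [← div_le_iff₀ (by linarith)]; exact (le_max_right _ _).trans hN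
  refine ⟨N, ⌊α * N⌋₊, hxN, Nat.floor_le (by positivity), ?_⟩
  -- `x ⌊α N⌋ > x (α N - 1) ≥ y N`, the last step being `hgap`
  nlinarith [Nat.lt_floor_add_one (α * N)]

lemma mem_convexHull_latticePointsBelow {x y : ℝ} {N m : ℕ} (hx : 0 < x) (hy : 0 ≤ y)
    (hxN : x ≤ N) (hm : (m : ℝ) ≤ α * N) (hslope : y * N ≤ x * m) :
    (x, y) ∈ convexHull ℝ (latticePointsBelow α) := by
  set H := convexHull ℝ (latticePointsBelow α)
  have hconv : Convex ℝ H := convex_convexHull ℝ _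
  have hN : (0 : ℝ) < N := hx.trans_le hxN
  have hbase : ((N : ℝ), (0 : ℝ)) ∈ H := subset_convexHull ℝ _ <| by
    simpa using natCast_mem_latticePointsBelow (a := N) (b := 0) (by
      simpa using (Nat.cast_nonneg m).trans hm)
  have htop : ((N : ℝ), (m : ℝ)) ∈ H := subset_convexHull ℝ _ (natCast_mem_latticePointsBelow hm)
  have hedge : ((N : ℝ), y * N / x) ∈ H := by
    refine hconv.segment_subset hbase htop ?_
    rw [← Prod.image_mk_segment_right, segment_eq_Icc (Nat.cast_nonneg m)]
    exact ⟨_, ⟨by positivity, by rwa [div_le_iff₀' hx]⟩, rfl⟩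
  -- `(x, y)` is `(x / N) • (N, y N / x)`, a point of the vertical edge scaled towards `0`
  have := hconv.smul_mem_of_zero_mem (subset_convexHull ℝ _ zero_mem_latticePointsBelow) hedge
    (t := x / N) ⟨by positivity, by rwa [div_le_one hN]⟩
  convert this using 1
  ext <;> simp <;> field_simp

theorem convexHull_latticePointsBelow (hα : Irrational α) (hα₀ : 0 ≤ α) :
    convexHull ℝ (latticePointsBelow α) = insert 0 (sectorBelow α : Set (ℝ × ℝ)) := by
  refine (convexHull_min (latticePointsBelow_subset hα)
    (sectorBelow α).convex_insert_zero).antisymm ?_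
  rintro p (rfl | ⟨hy, hyx⟩)
  · exact subset_convexHull ℝ _ zero_mem_latticePointsBelow
  have hx : 0 < p.1 := pos_of_mul_pos_right (hy.trans_lt hyx) hα₀
  obtain ⟨N, m, hxN, hm, hslope⟩ := exists_nat_slope_between hα₀ hx hyx
  exact mem_convexHull_latticePointsBelow hx hy hxN hm hslope

lemma insert_zero_sectorBelow_eq (hα : 0 ≤ α) :
    insert 0 (sectorBelow α : Set (ℝ × ℝ)) =
      {p : ℝ × ℝ | 0 ≤ p.1 ∧ 0 ≤ p.2 ∧ p.2 ≤ α * p.1} \ {p | p.2 = α * p.1 ∧ 0 < p.1} := by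
  ext ⟨x, y⟩
  simp only [Set.mem_insert_iff, SetLike.mem_coe, mem_sectorBelow, Set.mem_sdiff,
    Set.mem_ofPred_eq, Prod.mk_eq_zero, not_and, not_lt]
  constructor
  · rintro (⟨rfl, rfl⟩ | ⟨hy, hyx⟩)
    · simp
    · have hx : 0 < x := pos_of_mul_pos_right (hy.trans_lt hyx) hα
      exact ⟨⟨hx.le, hy, hyx.le⟩, fun h => absurd h hyx.ne⟩
  · rintro ⟨⟨hx, hy, hyx⟩, hne⟩
    obtain hlt | heq := hyx.lt_or_eq
    · exact .inr ⟨hy, hlt⟩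
    · have hx₀ : x = 0 := (hne heq).antisymm hx
      exact .inl ⟨hx₀, by simpa [hx₀] using heq⟩

theorem example1_convexHull
    (X : Set (ℝ × ℝ))
    (hX : X = {p : ℝ × ℝ | (∃ a b : ℤ, 0 ≤ a ∧ 0 ≤ b ∧ p = ((a : ℝ), (b : ℝ))) ∧
      p.2 ≤ Real.sqrt 2 * p.1}) :
    convexHull ℝ X =
      {p : ℝ × ℝ | 0 ≤ p.1 ∧ 0 ≤ p.2 ∧ p.2 ≤ Real.sqrt 2 * p.1} \
        {p : ℝ × ℝ | p.2 = Real.sqrt 2 * p.1 ∧ 0 < p.1} := by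
  subst hX
  rw [← insert_zero_sectorBelow_eq (Real.sqrt_nonneg 2)]
  exact convexHull_latticePointsBelow irrational_sqrt_two (Real.sqrt_nonneg 2)
end

section
/- Let X = { (x,y) ∈ ℤ₊² : y ≤ √2·x }. Then closure(conv X) = { (x,y) ∈ ℝ₊² : y ≤ √2·x }. -/
theorem example1_closed_convexHull
    (X : Set (ℝ × ℝ))
    (hX : X = {p : ℝ × ℝ | (∃ a b : ℤ, 0 ≤ a ∧ 0 ≤ b ∧ p = ((a : ℝ), (b : ℝ))) ∧
      p.2 ≤ Real.sqrt 2 * p.1}) :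
    closure (convexHull ℝ X) =
      {p : ℝ × ℝ | 0 ≤ p.1 ∧ 0 ≤ p.2 ∧ p.2 ≤ Real.sqrt 2 * p.1} := by
  have h2 : (0:ℝ) ≤ Real.sqrt 2 := Real.sqrt_nonneg 2
  have h12 : (1:ℝ) ≤ Real.sqrt 2 := by
    rw [show (1:ℝ) = Real.sqrt 1 by simp]
    exact Real.sqrt_le_sqrt (by norm_num)
  set C : Set (ℝ × ℝ) := {p : ℝ × ℝ | 0 ≤ p.1 ∧ 0 ≤ p.2 ∧ p.2 ≤ Real.sqrt 2 * p.1} with hC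
  apply Set.Subset.antisymm
  · -- closure of hull ⊆ cone
    have hconv : Convex ℝ C := by
      intro x hx y hy a b ha hb hab
      obtain ⟨hx1, hx2, hx3⟩ := hx
      obtain ⟨hy1, hy2, hy3⟩ := hy
      refine ⟨?_, ?_, ?_⟩ <;> simp only [Prod.smul_fst, Prod.smul_snd, Prod.fst_add,
        Prod.snd_add, smul_eq_mul]
      · positivity
      · positivity
      · nlinarith [mul_le_mul_of_nonneg_left hx3 ha, mul_le_mul_of_nonneg_left hy3 hb]
    have hclosed : IsClosed C := by
      have : C = {p : ℝ × ℝ | 0 ≤ p.1} ∩ ({p : ℝ × ℝ | 0 ≤ p.2} ∩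
          {p : ℝ × ℝ | p.2 ≤ Real.sqrt 2 * p.1}) := rfl
      rw [this]
      exact (isClosed_le continuous_const continuous_fst).inter
        ((isClosed_le continuous_const continuous_snd).inter
          (isClosed_le continuous_snd (continuous_const.mul continuous_fst)))
    have hXsub : X ⊆ C := by
      rintro p hp
      rw [hX] at hp
      obtain ⟨⟨a, b, ha, hb, hp'⟩, hle⟩ := hp
      refine ⟨?_, ?_, hle⟩ <;> rw [hp'] <;> simp <;> exact_mod_cast (by assumption)
    exact closure_minimal (convexHull_min hXsub hconv) hclosed
  · intro p hp
    obtain ⟨hx, hy, hxy⟩ := hp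
    rcases eq_or_lt_of_le hx with h0 | hxpos
    · -- p = (0,0)
      have hy0 : p.2 = 0 := le_antisymm (by rw [← h0] at hxy; simpa using hxy) hy
      have hpe : p = ((0:ℝ), (0:ℝ)) := by
        ext <;> simp [← h0, hy0]
      apply subset_closure
      apply subset_convexHull
      rw [hX, hpe]
      exact ⟨⟨0, 0, le_refl _, le_refl _, by norm_num⟩, by simpa using h2⟩
    · -- x > 0 : approximate by points in triangles
      have hO : ((0:ℝ), (0:ℝ)) ∈ X := by
        rw [hX]; exact ⟨⟨0, 0, le_refl _, le_refl _, by norm_num⟩, by simpa using h2⟩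
      set c : ℕ → ℝ := fun n => (⌊Real.sqrt 2 * n⌋₊ : ℝ) / n with hc
      have hctend : Filter.Tendsto c Filter.atTop (nhds (Real.sqrt 2)) :=
        (tendsto_nat_floor_mul_div_atTop h2).comp tendsto_natCast_atTop_atTop
      set q : ℕ → ℝ × ℝ := fun n => (p.1, min p.2 (c n * p.1)) with hq
      have hqtend : Filter.Tendsto q Filter.atTop (nhds p) := by
        have h1 : Filter.Tendsto (fun n => min p.2 (c n * p.1)) Filter.atTop
            (nhds (min p.2 (Real.sqrt 2 * p.1))) :=
          (tendsto_const_nhds).min (hctend.mul_const p.1)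
        rw [min_eq_left hxy] at h1
        have := (tendsto_const_nhds (x := p.1)).prodMk_nhds h1
        simpa using this
      refine mem_closure_of_tendsto hqtend ?_
      have hev1 : ∀ᶠ n : ℕ in Filter.atTop, 1 ≤ n := Filter.eventually_ge_atTop 1
      have hev2 : ∀ᶠ n : ℕ in Filter.atTop, p.1 ≤ (n : ℝ) :=
        tendsto_natCast_atTop_atTop.eventually_ge_atTop p.1
      filter_upwards [hev1, hev2] with n hn1 hn2
      -- set up
      set N : ℝ := (n : ℝ) with hN
      have hN1 : (1:ℝ) ≤ N := by rw [hN]; exact_mod_cast hn1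
      have hNpos : (0:ℝ) < N := lt_of_lt_of_le one_pos hN1
      set m : ℕ := ⌊Real.sqrt 2 * n⌋₊ with hm
      set M : ℝ := (m : ℝ) with hM
      have hM1 : (1:ℝ) ≤ M := by
        have : 1 ≤ m := Nat.le_floor (by push_cast; nlinarith)
        rw [hM]; exact_mod_cast this
      have hMpos : (0:ℝ) < M := lt_of_lt_of_le one_pos hM1
      have hMle : M ≤ Real.sqrt 2 * N := by
        have := Nat.floor_le (a := Real.sqrt 2 * n) (by positivity)
        simpa [hM, hm, hN] using this
      have hA : ((N:ℝ), (0:ℝ)) ∈ X := by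
        rw [hX]
        exact ⟨⟨(n:ℤ), 0, Int.ofNat_nonneg n, le_refl _, by push_cast; rfl⟩, by positivity⟩
      have hB : ((N:ℝ), (M:ℝ)) ∈ X := by
        rw [hX]
        exact ⟨⟨(n:ℤ), (m:ℤ), Int.ofNat_nonneg n, Int.ofNat_nonneg m, by push_cast; rfl⟩,
          hMle⟩
      set t : ℝ := min p.2 (c n * p.1) with ht
      have hcn : c n = M / N := rfl
      have ht0 : 0 ≤ t := le_min hy (by
        rw [hcn]; positivity)
      have htle : t ≤ M / N * p.1 := by rw [ht, hcn]; exact min_le_right _ _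
      set s : ℝ := t * N / p.1 with hs
      have hs0 : 0 ≤ s := by positivity
      have hsM : s ≤ M := by
        rw [hs, div_le_iff₀ hxpos]
        calc t * N ≤ (M / N * p.1) * N := by nlinarith
          _ = M * p.1 := by field_simp
      -- (N, s) in hull
      have hCmem : ((N:ℝ), s) ∈ convexHull ℝ X := by
        have := (convex_convexHull ℝ X) (subset_convexHull ℝ X hA) (subset_convexHull ℝ X hB)
          (a := 1 - s / M) (b := s / M)
          (by have : s / M ≤ 1 := (div_le_one hMpos).mpr hsM; linarith)
          (by positivity) (by ring)
        convert this using 1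
        ext
        · simp [Prod.smul_fst]; ring
        · simp [Prod.smul_snd, smul_eq_mul]
          field_simp
      -- q n in hull
      have hq' : q n = (1 - p.1 / N) • ((0:ℝ), (0:ℝ)) + (p.1 / N) • ((N:ℝ), s) := by
        ext
        · simp [hq, Prod.smul_fst, smul_eq_mul]
          field_simp
        · simp [hq, Prod.smul_snd, smul_eq_mul, hs]
          rw [← ht]
          field_simp
      rw [hq']
      exact (convex_convexHull ℝ X) (subset_convexHull ℝ X hO) hCmem
        (by have : p.1 / N ≤ 1 := (div_le_one hNpos).mpr hn2; linarith)
        (by positivity) (by ring)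
end

section
/- Let X = { (x,y) ∈ ℤ₊² : y ≤ √2·x }. Then the only point of conv(X) satisfying −√2·x + y ≥ 0 is the origin, so inf { −x : −√2·x + y ≥ 0, (x,y) ∈ conv X } = 0, while the Lagrangian dual value v^L of the same program is −∞. In particular v^L < v*. -/
/-- The "strict cone" set that contains X and is convex. -/
def Scone : Set (ℝ × ℝ) :=
  {p | 0 ≤ p.1 ∧ 0 ≤ p.2 ∧ (p.2 < Real.sqrt 2 * p.1 ∨ (p.1 = 0 ∧ p.2 = 0))}

lemma key_arith (s x1 y1 x2 y2 a b : ℝ) (hs : 0 < s)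
    (h2 : 0 ≤ y1) (h3 : y1 < s*x1 ∨ (x1 = 0 ∧ y1 = 0))
    (h5 : 0 ≤ y2) (h6 : y2 < s*x2 ∨ (x2 = 0 ∧ y2 = 0))
    (ha : 0 ≤ a) (hb : 0 ≤ b) (hab : a + b = 1) :
    a*y1 + b*y2 < s*(a*x1 + b*x2) ∨ (a*x1 + b*x2 = 0 ∧ a*y1 + b*y2 = 0) := by
  rcases h3 with h3 | ⟨hx1, hy1⟩ <;> rcases h6 with h6 | ⟨hx2, hy2⟩
  · rcases eq_or_lt_of_le ha with ha0 | ha0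
    · left; rw [← ha0] at hab; nlinarith
    · left; nlinarith [mul_lt_mul_of_pos_left h3 ha0,
        mul_le_mul_of_nonneg_left h6.le hb]
  · subst hx2; subst hy2
    rcases eq_or_lt_of_le ha with ha0 | ha0
    · right; constructor <;> nlinarith
    · left; nlinarith [mul_lt_mul_of_pos_left h3 ha0]
  · subst hx1; subst hy1
    rcases eq_or_lt_of_le hb with hb0 | hb0
    · right; constructor <;> nlinarith
    · left; nlinarith [mul_lt_mul_of_pos_left h6 hb0]
  · right; subst hx1; subst hy1; subst hx2; subst hy2
    constructor <;> ring

lemma Scone_convex : Convex ℝ Scone := by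
  intro p hp q hq a b ha hb hab
  obtain ⟨hp1, hp2, hp3⟩ := hp
  obtain ⟨hq1, hq2, hq3⟩ := hq
  have hs2 : 0 < Real.sqrt 2 := Real.sqrt_pos.mpr (by norm_num)
  refine ⟨?_, ?_, ?_⟩
  · simp only [Prod.fst_add, Prod.smul_fst, smul_eq_mul]
    positivity
  · simp only [Prod.snd_add, Prod.smul_snd, smul_eq_mul]
    positivity
  · simp only [Prod.fst_add, Prod.smul_fst, Prod.snd_add, Prod.smul_snd, smul_eq_mul]
    exact key_arith _ _ _ _ _ _ _ hs2 hp2 hp3 hq2 hq3 ha hb hab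

/-- Pell-type sequence: solutions of `2*a^2 - b^2 = 1`. -/
def pell : ℕ → ℤ × ℤ
  | 0 => (1, 1)
  | n+1 => (3*(pell n).1 + 2*(pell n).2, 4*(pell n).1 + 3*(pell n).2)

lemma pell_prop (n : ℕ) : 1 ≤ (pell n).1 ∧ 1 ≤ (pell n).2 ∧
    2*(pell n).1^2 - (pell n).2^2 = 1 ∧ (n:ℤ) + 1 ≤ (pell n).1 := by
  induction n with
  | zero => norm_num [pell]
  | succ n ih =>
    obtain ⟨h1, h2, h3, h4⟩ := ih
    refine ⟨by simp [pell]; omega, by simp [pell]; omega, ?_, by simp [pell]; omega⟩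
    show 2*(3*(pell n).1 + 2*(pell n).2)^2 - (4*(pell n).1 + 3*(pell n).2)^2 = 1
    linear_combination h3

theorem example1_gap
    (X : Set (ℝ × ℝ))
    (hX : X = {p : ℝ × ℝ | (∃ a b : ℤ, 0 ≤ a ∧ 0 ≤ b ∧ p = ((a : ℝ), (b : ℝ))) ∧
      p.2 ≤ Real.sqrt 2 * p.1}) :
    {p ∈ convexHull ℝ X | -(Real.sqrt 2) * p.1 + p.2 ≥ 0} = {(0, 0)} ∧
    sInf ((fun p : ℝ × ℝ => ((-p.1 : ℝ) : EReal)) ''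
        {p ∈ convexHull ℝ X | -(Real.sqrt 2) * p.1 + p.2 ≥ 0}) = (0 : EReal) ∧
    sSup ((fun lam : ℝ =>
        sInf ((fun p : ℝ × ℝ =>
          ((-p.1 + lam * (Real.sqrt 2 * p.1 - p.2) : ℝ) : EReal)) '' X)) ''
        {lam : ℝ | 0 ≤ lam}) = ⊥ ∧
    sSup ((fun lam : ℝ =>
        sInf ((fun p : ℝ × ℝ =>
          ((-p.1 + lam * (Real.sqrt 2 * p.1 - p.2) : ℝ) : EReal)) '' X)) ''
        {lam : ℝ | 0 ≤ lam}) <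
      sInf ((fun p : ℝ × ℝ => ((-p.1 : ℝ) : EReal)) ''
        {p ∈ convexHull ℝ X | -(Real.sqrt 2) * p.1 + p.2 ≥ 0}) := by
  have hs2 : 0 < Real.sqrt 2 := Real.sqrt_pos.mpr (by norm_num)
  have hs2sq : Real.sqrt 2 ^ 2 = 2 := Real.sq_sqrt (by norm_num)
  -- X ⊆ Scone
  have hXS : X ⊆ Scone := by
    rintro p hp
    rw [hX] at hp
    obtain ⟨⟨a, b, ha, hb, rfl⟩, hle⟩ := hp
    have hle' : (b:ℝ) ≤ Real.sqrt 2 * (a:ℝ) := hle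
    have ha' : (0:ℝ) ≤ (a:ℝ) := by exact_mod_cast ha
    have hb' : (0:ℝ) ≤ (b:ℝ) := by exact_mod_cast hb
    refine ⟨ha', hb', ?_⟩
    rcases eq_or_lt_of_le hle' with he | hlt
    · right
      have hane : (a:ℝ) = 0 := by
        by_contra hne
        apply irrational_sqrt_two
        refine ⟨(b:ℚ)/(a:ℚ), ?_⟩
        push_cast
        rw [div_eq_iff hne]
        exact he
      have hbne : (b:ℝ) = 0 := by rw [he, hane, mul_zero]
      exact ⟨hane, hbne⟩
    · left; exact hlt
  have hconvS : convexHull ℝ X ⊆ Scone := convexHull_min hXS Scone_convex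
  -- (0,0) ∈ X
  have h00X : ((0:ℝ), (0:ℝ)) ∈ X := by
    rw [hX]
    exact ⟨⟨0, 0, le_refl _, le_refl _, by norm_num⟩, by norm_num⟩
  -- Part 1
  have part1 : {p ∈ convexHull ℝ X | -(Real.sqrt 2) * p.1 + p.2 ≥ 0} = {((0:ℝ), (0:ℝ))} := by
    ext p
    simp only [Set.mem_setOf_eq, Set.mem_singleton_iff]
    constructor
    · rintro ⟨hp, hge⟩
      obtain ⟨h1, h2, h3⟩ := hconvS hp
      rcases h3 with h3 | ⟨h3, h4⟩
      · exfalso; linarith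
      · exact Prod.ext h3 h4
    · rintro rfl
      exact ⟨subset_convexHull ℝ X h00X, by norm_num⟩
  -- Part 2
  have part2 : sInf ((fun p : ℝ × ℝ => ((-p.1 : ℝ) : EReal)) ''
      {p ∈ convexHull ℝ X | -(Real.sqrt 2) * p.1 + p.2 ≥ 0}) = (0 : EReal) := by
    rw [part1, Set.image_singleton, sInf_singleton]
    norm_num
  -- Part 3: each inner infimum is ⊥
  have inner_bot : ∀ lam : ℝ, 0 ≤ lam →
      sInf ((fun p : ℝ × ℝ =>
        ((-p.1 + lam * (Real.sqrt 2 * p.1 - p.2) : ℝ) : EReal)) '' X) = ⊥ := by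
    intro lam hlam
    rw [EReal.eq_bot_iff_forall_lt]
    intro y
    obtain ⟨n, hn⟩ := exists_nat_gt (lam - y)
    obtain ⟨h1, h2, h3, h4⟩ := pell_prop n
    set A : ℝ := ((pell n).1 : ℝ) with hA
    set B : ℝ := ((pell n).2 : ℝ) with hB
    have hA1 : (1:ℝ) ≤ A := by rw [hA]; exact_mod_cast h1
    have hB1 : (1:ℝ) ≤ B := by rw [hB]; exact_mod_cast h2
    have h2AB : 2*A^2 - B^2 = 1 := by rw [hA, hB]; exact_mod_cast h3
    have hAn : (n:ℝ) + 1 ≤ A := by rw [hA]; exact_mod_cast h4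
    have hBle : B < Real.sqrt 2 * A := by
      apply lt_of_pow_lt_pow_left₀ 2 (by positivity)
      have : (Real.sqrt 2 * A)^2 = 2*A^2 := by rw [mul_pow, hs2sq]
      rw [this]; nlinarith
    have hgap : Real.sqrt 2 * A - B ≤ 1 := by
      nlinarith [hs2sq, mul_pos hs2 (lt_of_lt_of_le one_pos hA1)]
    -- the Pell point is in X
    have hmem : ((A, B) : ℝ × ℝ) ∈ X := by
      rw [hX]
      exact ⟨⟨(pell n).1, (pell n).2, by omega, by omega, rfl⟩, hBle.le⟩
    have hval : -A + lam * (Real.sqrt 2 * A - B) < y := by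
      have h5 : lam * (Real.sqrt 2 * A - B) ≤ lam :=
        le_trans (mul_le_mul_of_nonneg_left hgap hlam) (by linarith)
      linarith
    calc sInf ((fun p : ℝ × ℝ =>
          ((-p.1 + lam * (Real.sqrt 2 * p.1 - p.2) : ℝ) : EReal)) '' X)
        ≤ ((-A + lam * (Real.sqrt 2 * A - B) : ℝ) : EReal) :=
          sInf_le ⟨(A, B), hmem, rfl⟩
      _ < (y : EReal) := by exact_mod_cast hval
  have part3 : sSup ((fun lam : ℝ =>
      sInf ((fun p : ℝ × ℝ =>
        ((-p.1 + lam * (Real.sqrt 2 * p.1 - p.2) : ℝ) : EReal)) '' X)) ''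
      {lam : ℝ | 0 ≤ lam}) = ⊥ := by
    have himg : (fun lam : ℝ =>
        sInf ((fun p : ℝ × ℝ =>
          ((-p.1 + lam * (Real.sqrt 2 * p.1 - p.2) : ℝ) : EReal)) '' X)) ''
        {lam : ℝ | 0 ≤ lam} = {⊥} := by
      apply Set.Subset.antisymm
      · rintro x ⟨lam, hlam, rfl⟩
        exact inner_bot lam hlam
      · rintro x rfl
        exact ⟨0, by norm_num, inner_bot 0 (le_refl 0)⟩
    rw [himg, sSup_singleton]
  refine ⟨part1, part2, part3, ?_⟩
  rw [part2, part3]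
  exact_mod_cast EReal.bot_lt_coe 0
end

section
/- Let P¹, P² ⊆ ℝ³ be as follows: P¹ = { (x,y,z) : √2·x ≥ y ≥ 0, z = 0 }, P² = { (x,y,z) : √2·x ≥ y ≥ 0, x ≥ 1/2, z = 1 }, and X = (P¹ ∪ P²) ∩ ℤ³. Consider the program minimize −z subject to −√2·x + y ≥ 0, (x,y,z) ∈ X. Then the Lagrangian dual value v^L = sup_{λ≥0} inf_{(x,y,z)∈X}(−z + λ(√2·x − y)) equals −1, whereas the optimal value over closure(conv X) equals 0; hence v^L < v̄*. -/
/-!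
Every point of `X` has `z ≤ 1` and `d := √2 x - y ≥ 0`, so each Lagrangian value is at least `-1`;
the solutions `(a, b)` of `2a² - b² = 1` give points `(a, b, 1) ∈ X` with `d = 1 / (√2 a + b)`
arbitrarily small, so each Lagrangian value is exactly `-1`.

For the hull, irrationality of `√2` makes `2a² - b²` a positive integer at every integer point
with `z = 1`, whence `4 a d ≥ 1`. Hence `X` satisfies `t z ≤ t² d + x` for every real `t`
(a quadratic in `t` with discriminant `1 - 4 a d ≤ 0`). These are closed half-spaces, so they
hold on the closed convex hull, and where `d ≤ 0` they give `t z ≤ x` for all `t`, i.e. `z ≤ 0`.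
-/

theorem exists_two_mul_sq_sub_sq_eq_one (n : ℕ) :
    ∃ a b : ℤ, 2 * a ^ 2 - b ^ 2 = 1 ∧ n < a ∧ 0 < b := by
  induction n with
  | zero => exact ⟨1, 1, by norm_num, by norm_num, by norm_num⟩
  | succ n ih =>
    obtain ⟨a, b, hpell, ha, hb⟩ := ih
    -- multiply `b + a √2` by the unit `3 + 2 √2`
    exact ⟨3 * a + 2 * b, 4 * a + 3 * b, by linear_combination hpell, by push_cast; omega,
      by omega⟩

theorem exists_int_sqrt_two_mul_sub_lt {ε : ℝ} (hε : 0 < ε) :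
    ∃ a b : ℤ, 1 ≤ a ∧ 0 ≤ b ∧ b ≤ √2 * a ∧ √2 * a - b < ε := by
  obtain ⟨n, hn⟩ := exists_nat_gt ε⁻¹
  obtain ⟨a, b, hpell, ha, hb⟩ := exists_two_mul_sq_sub_sq_eq_one n
  have ha' : (n : ℝ) < a := by exact_mod_cast ha
  have hb' : (0 : ℝ) < b := by exact_mod_cast hb
  have hsq : √2 ^ 2 = 2 := Real.sq_sqrt zero_le_two
  have h1 : (1 : ℝ) ≤ √2 := Real.one_le_sqrt.mpr one_le_two
  have hprod : (√2 * a - b) * (√2 * a + b) = 1 := by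
    have : (2 * a ^ 2 - b ^ 2 : ℝ) = 1 := by exact_mod_cast hpell
    linear_combination (a : ℝ) ^ 2 * hsq + this
  have hlarge : ε⁻¹ < √2 * a + b := by nlinarith
  have hgap : 0 < √2 * a - b :=
    pos_of_mul_pos_left (hprod ▸ one_pos) ((inv_pos.mpr hε).trans hlarge).le
  refine ⟨a, b, by omega, hb.le, by linarith, ?_⟩
  rw [inv_lt_iff_one_lt_mul₀ hε] at hlarge
  nlinarith

theorem one_le_four_mul_mul_sqrt_two_mul_sub {a b : ℤ} (ha : 0 < a) (hb : 0 ≤ b)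
    (hba : b ≤ √2 * a) : 1 ≤ 4 * a * (√2 * a - b) := by
  have hsq : √2 ^ 2 = 2 := Real.sq_sqrt zero_le_two
  have hne : √2 * a ≠ b := (irrational_sqrt_two.mul_intCast ha.ne').ne_int b
  have hgap : 0 < √2 * a - b := sub_pos.mpr (lt_of_le_of_ne hba hne.symm)
  have hb' : (0 : ℝ) ≤ b := by exact_mod_cast hb
  have hprod : (√2 * a - b) * (√2 * a + b) = ((2 * a ^ 2 - b ^ 2 : ℤ) : ℝ) := by
    push_cast; linear_combination (a : ℝ) ^ 2 * hsq
  have hint : (1 : ℝ) ≤ (√2 * a - b) * (√2 * a + b) := by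
    have hpos : (0 : ℝ) < (√2 * a - b) * (√2 * a + b) := by positivity
    rw [hprod] at hpos ⊢
    exact_mod_cast (show (0 : ℤ) < 2 * a ^ 2 - b ^ 2 by exact_mod_cast hpos)
  have h2 : √2 ≤ 2 := by nlinarith [Real.sqrt_nonneg 2]
  have ha' : (0 : ℝ) < a := by exact_mod_cast ha
  nlinarith

theorem EReal.sInf_image_coe_eq {α : Type*} {s : Set α} {f : α → ℝ} {m : ℝ}
    (hle : ∀ x ∈ s, m ≤ f x) (hlt : ∀ ε > 0, ∃ x ∈ s, f x < m + ε) :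
    sInf ((fun x => (f x : EReal)) '' s) = m := by
  refine IsGLB.sInf_eq ⟨?_, fun b hb => ?_⟩
  · rintro _ ⟨x, hx, rfl⟩
    exact EReal.coe_le_coe_iff.mpr (hle x hx)
  · refine le_of_forall_gt_imp_ge_of_dense fun c hc => ?_
    obtain ⟨w, hmw, hwc⟩ := EReal.lt_iff_exists_real_btwn.mp hc
    obtain ⟨x, hx, hfx⟩ := hlt (w - m) (by exact_mod_cast sub_pos.mpr hmw)
    calc b ≤ f x := hb ⟨x, hx, rfl⟩
      _ ≤ w := by exact_mod_cast (by linarith : f x ≤ w)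
      _ ≤ c := hwc.le

def exampleSet : Set (ℝ × ℝ × ℝ) :=
  ({p : ℝ × ℝ × ℝ | p.2.1 ≤ √2 * p.1 ∧ 0 ≤ p.2.1 ∧ p.2.2 = 0} ∪
    {p : ℝ × ℝ × ℝ | p.2.1 ≤ √2 * p.1 ∧ 0 ≤ p.2.1 ∧ (1 : ℝ) / 2 ≤ p.1 ∧ p.2.2 = 1}) ∩
    {p : ℝ × ℝ × ℝ | ∃ a b c : ℤ, p = ((a : ℝ), (b : ℝ), (c : ℝ))}

noncomputable def dualValue (X : Set (ℝ × ℝ × ℝ)) : EReal :=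
  sSup ((fun lam : ℝ =>
    sInf ((fun p : ℝ × ℝ × ℝ =>
      ((-p.2.2 + lam * (√2 * p.1 - p.2.1) : ℝ) : EReal)) '' X)) '' {lam : ℝ | 0 ≤ lam})

noncomputable def closedConvexHullValue (X : Set (ℝ × ℝ × ℝ)) : EReal :=
  sInf ((fun p : ℝ × ℝ × ℝ => ((-p.2.2 : ℝ) : EReal)) ''
    {p ∈ closure (convexHull ℝ X) | √2 * p.1 ≤ p.2.1})

theorem sInf_lagrangian_exampleSet {lam : ℝ} (hlam : 0 ≤ lam) :
    sInf ((fun p : ℝ × ℝ × ℝ =>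
      ((-p.2.2 + lam * (√2 * p.1 - p.2.1) : ℝ) : EReal)) '' exampleSet) =
      ((-1 : ℝ) : EReal) := by
  refine EReal.sInf_image_coe_eq ?_ fun ε hε => ?_
  · rintro p ⟨⟨hy, -, hz⟩ | ⟨hy, -, -, hz⟩, -⟩ <;>
      nlinarith [mul_nonneg hlam (sub_nonneg.mpr hy)]
  · obtain ⟨a, b, ha, hb, hba, hgap⟩ :=
      exists_int_sqrt_two_mul_sub_lt (div_pos hε (by linarith : 0 < lam + 1))
    have ha' : (1 : ℝ) ≤ a := by exact_mod_cast ha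
    refine ⟨(a, b, 1),
      ⟨Or.inr ⟨hba, Int.cast_nonneg hb, by linarith, rfl⟩, a, b, 1, by simp⟩, ?_⟩
    rw [lt_div_iff₀ (by linarith)] at hgap
    dsimp only
    nlinarith [mul_nonneg hlam (sub_nonneg.mpr hba)]

theorem dualValue_exampleSet : dualValue exampleSet = ((-1 : ℝ) : EReal) := by
  rw [dualValue, Set.image_congr (s := {lam : ℝ | 0 ≤ lam}) fun _ => sInf_lagrangian_exampleSet,
    (show {lam : ℝ | 0 ≤ lam}.Nonempty from ⟨0, le_refl (0 : ℝ)⟩).image_const, sSup_singleton]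

def parabolicCut (t : ℝ) : Set (ℝ × ℝ × ℝ) :=
  {p | t * p.2.2 ≤ t ^ 2 * (√2 * p.1 - p.2.1) + p.1}

theorem convex_parabolicCut (t : ℝ) : Convex ℝ (parabolicCut t) := by
  intro p hp q hq a b ha hb _
  simp only [parabolicCut, Set.mem_ofPred_eq, Prod.fst_add, Prod.snd_add, Prod.smul_fst,
    Prod.smul_snd, smul_eq_mul] at hp hq ⊢
  linear_combination a * hp + b * hq

theorem isClosed_parabolicCut (t : ℝ) : IsClosed (parabolicCut t) :=
  isClosed_le (by fun_prop) (by fun_prop)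

theorem exampleSet_subset_parabolicCut (t : ℝ) : exampleSet ⊆ parabolicCut t := by
  rintro p ⟨⟨hy, hy0, hz⟩ | ⟨hy, hy0, hx, hz⟩, a, b, c, rfl⟩ <;>
    simp only [parabolicCut, Set.mem_ofPred_eq] at *
  · have ha : (0 : ℝ) ≤ a := nonneg_of_mul_nonneg_right (hy0.trans hy) (by positivity)
    rw [hz, mul_zero]
    exact add_nonneg (mul_nonneg (sq_nonneg t) (sub_nonneg.mpr hy)) ha
  · have ha : 0 < a := by exact_mod_cast (show (0 : ℝ) < a by linarith)
    have key := one_le_four_mul_mul_sqrt_two_mul_sub ha (by exact_mod_cast hy0) hy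
    rw [hz]
    nlinarith [sq_nonneg (2 * (√2 * a - b) * t - 1)]

theorem nonpos_of_mem_closure_convexHull_exampleSet {p : ℝ × ℝ × ℝ}
    (hp : p ∈ closure (convexHull ℝ exampleSet)) (hd : √2 * p.1 ≤ p.2.1) : p.2.2 ≤ 0 := by
  have hcut (t : ℝ) : t * p.2.2 ≤ p.1 := by
    have : p ∈ parabolicCut t := (isClosed_parabolicCut t).closure_subset_iff.mpr
      ((convex_parabolicCut t).convexHull_subset_iff.mpr (exampleSet_subset_parabolicCut t)) hp
    linarith [mul_nonpos_of_nonneg_of_nonpos (sq_nonneg t) (sub_nonpos.mpr hd), this.out]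
  by_contra! hz
  have := hcut ((p.1 + 1) / p.2.2)
  rw [div_mul_cancel₀ _ hz.ne'] at this
  linarith

theorem closedConvexHullValue_exampleSet : closedConvexHullValue exampleSet = 0 := by
  refine IsLeast.csInf_eq ⟨⟨0, ⟨?_, by simp⟩, by simp⟩, ?_⟩
  · exact subset_closure (subset_convexHull ℝ _
      ⟨Or.inl ⟨by simp, le_rfl, rfl⟩, 0, 0, 0, by simp [Prod.ext_iff]⟩)
  · rintro _ ⟨p, ⟨hp, hd⟩, rfl⟩
    exact EReal.coe_nonneg.mpr
      (neg_nonneg.mpr (nonpos_of_mem_closure_convexHull_exampleSet hp hd))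

theorem example2_gap
    (P1 P2 X : Set (ℝ × ℝ × ℝ))
    (hP1 : P1 = {p : ℝ × ℝ × ℝ | p.2.1 ≤ Real.sqrt 2 * p.1 ∧ 0 ≤ p.2.1 ∧ p.2.2 = 0})
    (hP2 : P2 = {p : ℝ × ℝ × ℝ | p.2.1 ≤ Real.sqrt 2 * p.1 ∧ 0 ≤ p.2.1 ∧
      (1 : ℝ) / 2 ≤ p.1 ∧ p.2.2 = 1})
    (hX : X = (P1 ∪ P2) ∩ {p : ℝ × ℝ × ℝ | ∃ a b c : ℤ,
      p = ((a : ℝ), (b : ℝ), (c : ℝ))}) :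
    sSup ((fun lam : ℝ =>
        sInf ((fun p : ℝ × ℝ × ℝ =>
          ((-p.2.2 + lam * (Real.sqrt 2 * p.1 - p.2.1) : ℝ) : EReal)) '' X)) ''
        {lam : ℝ | 0 ≤ lam}) = ((-1 : ℝ) : EReal) ∧
    sInf ((fun p : ℝ × ℝ × ℝ => ((-p.2.2 : ℝ) : EReal)) ''
        {p ∈ closure (convexHull ℝ X) | Real.sqrt 2 * p.1 ≤ p.2.1}) = (0 : EReal) ∧
    sSup ((fun lam : ℝ =>
        sInf ((fun p : ℝ × ℝ × ℝ =>
          ((-p.2.2 + lam * (Real.sqrt 2 * p.1 - p.2.1) : ℝ) : EReal)) '' X)) ''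
        {lam : ℝ | 0 ≤ lam}) <
      sInf ((fun p : ℝ × ℝ × ℝ => ((-p.2.2 : ℝ) : EReal)) ''
        {p ∈ closure (convexHull ℝ X) | Real.sqrt 2 * p.1 ≤ p.2.1}) := by
  subst hP1 hP2 hX
  have hdual := dualValue_exampleSet
  have hhull := closedConvexHullValue_exampleSet
  refine ⟨hdual, hhull, ?_⟩
  change dualValue exampleSet < closedConvexHullValue exampleSet
  rw [hdual, hhull]
  exact_mod_cast (by norm_num : (-1 : ℝ) < 0)
end

section
/- Suppose closure(conv X) is locally polyhedral, i.e., its intersection with every box is a polytope, and suppose the problem minimize c·x subject to Ax ≥ b, x ∈ closure(conv X) admits an optimal solution x*. Then v^L = v̄*, where v^L = sup_{λ≥0} inf_{x∈X}(c·x + λ·(b−Ax)) and v̄* = c·x*. -/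
/-!
On the box `B = [x* - 1, x* + 1]` the set `S = closure (conv X)` is a polytope `conv F`, so
linear programming duality (Farkas' lemma, through the closedness of finitely generated cones)
yields a multiplier `λ ≥ 0` such that `x*` minimizes the Lagrangian `c·x + λ·(b - Ax)` over
`S ∩ B`. Since `B` is a neighbourhood of `x*` and the Lagrangian is affine, this local minimum
on the convex set `S` is global. A continuous affine function has the same infimum over `X`
as over `S`, so `λ` attains `v̄*` in the dual, while weak duality bounds every dual value by
`c·x*`.
-/

open Matrix Set Topology

section ConicHull

variable {ι : Type*} [Fintype ι]

/-- The ratio test of the simplex method: `τ = t i / g i` for `i` minimizing this ratio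
over `0 < g i`. -/
lemma exists_nonneg_sub_smul_apply_eq_zero {t g : ι → ℝ} (ht : 0 ≤ t) (hg : ∃ i, 0 < g i) :
    ∃ i, 0 < g i ∧ ∃ τ : ℝ, 0 ≤ t - τ • g ∧ (t - τ • g) i = 0 := by
  classical
  obtain ⟨i, hi, hmin⟩ := (Finset.univ.filter fun j => 0 < g j).exists_min_image
    (fun j => t j / g j) (by simpa [Finset.Nonempty] using hg)
  have hgi : 0 < g i := (Finset.mem_filter.mp hi).2
  refine ⟨i, hgi, t i / g i, fun j => ?_, by simp [hgi.ne']⟩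
  have hτ : 0 ≤ t i / g i := div_nonneg (ht i) hgi.le
  rcases lt_or_ge 0 (g j) with hgj | hgj
  · have := hmin j (by simpa using hgj)
    rw [div_le_div_iff₀ hgi hgj] at this
    simp only [Pi.zero_apply, Pi.sub_apply, Pi.smul_apply, smul_eq_mul, sub_nonneg]
    rw [div_mul_eq_mul_div, div_le_iff₀ hgi]
    linarith
  · simp only [Pi.zero_apply, Pi.sub_apply, Pi.smul_apply, smul_eq_mul, sub_nonneg]
    exact (mul_nonpos_of_nonneg_of_nonpos hτ hgj).trans (ht j)

variable {E : Type*} [AddCommGroup E] [TopologicalSpace E] [IsTopologicalAddGroup E]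
  [Module ℝ E] [ContinuousSMul ℝ E] [T2Space E]

lemma LinearMap.isClosed_image_nonneg_supported_of_injective (L : (ι → ℝ) →ₗ[ℝ] E)
    (s : Finset ι) (hL : ∀ g : ι → ℝ, (∀ i ∉ s, g i = 0) → L g = 0 → g = 0) :
    IsClosed (L '' {t | 0 ≤ t ∧ ∀ i ∉ s, t i = 0}) := by
  let W : Submodule ℝ (ι → ℝ) := Submodule.pi (↑s)ᶜ fun _ => ⊥
  have hW : ∀ t, t ∈ W ↔ ∀ i ∉ s, t i = 0 := by simp [W, Submodule.mem_pi]
  have hemb : IsClosedEmbedding (L.domRestrict W) := by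
    refine LinearMap.isClosedEmbedding_of_injective (LinearMap.ker_eq_bot'.mpr fun w hw => ?_)
    exact Subtype.ext (hL w ((hW w).mp w.2) hw)
  have himage : L '' {t | 0 ≤ t ∧ ∀ i ∉ s, t i = 0} =
      L.domRestrict W '' {w | 0 ≤ (w : ι → ℝ)} := by
    ext x
    constructor
    · rintro ⟨t, ⟨ht, hts⟩, rfl⟩
      exact ⟨⟨t, (hW t).mpr hts⟩, ht, rfl⟩
    · rintro ⟨w, hw, rfl⟩
      exact ⟨w, ⟨hw, (hW w).mp w.2⟩, rfl⟩
  rw [himage]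
  exact hemb.isClosedMap _ (isClosed_le continuous_const continuous_subtype_val)

/-- Conic Carathéodory: when `L` is not injective on vectors supported in `s`, the ratio test
along a kernel vector removes an index from the support, so the cone is a finite union of cones
with smaller support. -/
lemma LinearMap.isClosed_image_nonneg_supported (L : (ι → ℝ) →ₗ[ℝ] E) (s : Finset ι) :
    IsClosed (L '' {t | 0 ≤ t ∧ ∀ i ∉ s, t i = 0}) := by
  classical
  induction s using Finset.strongInduction with
  | H s ih =>
    by_cases hinj : ∀ g : ι → ℝ, (∀ i ∉ s, g i = 0) → L g = 0 → g = 0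
    · exact L.isClosed_image_nonneg_supported_of_injective s hinj
    push Not at hinj
    obtain ⟨g, hgs, hLg, i₀, hi₀⟩ :
        ∃ g : ι → ℝ, (∀ i ∉ s, g i = 0) ∧ L g = 0 ∧ ∃ i, 0 < g i := by
      obtain ⟨g, hgs, hLg, hg⟩ := hinj
      obtain ⟨i, hi⟩ := Function.ne_iff.mp hg
      rcases hi.lt_or_gt with hneg | hpos
      · exact ⟨-g, by simpa using hgs, by simpa using hLg, i, by simpa using hneg⟩
      · exact ⟨g, hgs, hLg, i, hpos⟩
    have hmem : ∀ {i}, 0 < g i → i ∈ s := fun {i} hi => by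
      by_contra h; exact hi.ne' (hgs i h)
    suffices h : L '' {t | 0 ≤ t ∧ ∀ i ∉ s, t i = 0} =
        ⋃ i ∈ s, L '' {t | 0 ≤ t ∧ ∀ j ∉ s.erase i, t j = 0} by
      rw [h]
      exact s.finite_toSet.isClosed_biUnion fun i hi => ih _ (Finset.erase_ssubset hi)
    refine subset_antisymm ?_ (iUnion₂_subset fun i _ => image_mono fun t ⟨ht, hts⟩ =>
      ⟨ht, fun j hj => hts j fun hjs => hj (Finset.mem_of_mem_erase hjs)⟩)
    rintro _ ⟨t, ⟨ht, hts⟩, rfl⟩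
    obtain ⟨i, hgi, τ, hnonneg, hzero⟩ := exists_nonneg_sub_smul_apply_eq_zero ht ⟨i₀, hi₀⟩
    refine mem_biUnion (hmem hgi) ⟨t - τ • g, ⟨hnonneg, fun j hj => ?_⟩, by simp [hLg]⟩
    rcases eq_or_ne j i with rfl | hji
    · exact hzero
    · have hjs : j ∉ s := fun hjs => hj (Finset.mem_erase.mpr ⟨hji, hjs⟩)
      simp [hts j hjs, hgs j hjs]

lemma LinearMap.isClosed_image_Ici_zero (L : (ι → ℝ) →ₗ[ℝ] E) : IsClosed (L '' Ici 0) := by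
  simpa [Ici] using L.isClosed_image_nonneg_supported Finset.univ

/-- Farkas' lemma. -/
theorem Matrix.exists_nonneg_mulVec_le_of_forall_vecMul_nonneg {κ : Type*} [Fintype κ] (M : Matrix κ ι ℝ)
    (q : κ → ℝ) (h : ∀ μ : κ → ℝ, 0 ≤ μ → 0 ≤ μ ᵥ* M → 0 ≤ μ ⬝ᵥ q) :
    ∃ x, 0 ≤ x ∧ M *ᵥ x ≤ q := by
  classical
  let L := (M.fromCols (1 : Matrix κ κ ℝ)).mulVecLin
  have hL : ∀ t, L t = M *ᵥ (t ∘ Sum.inl) + t ∘ Sum.inr := by simp [L, fromCols_mulVec]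
  let C := (ProperCone.positive ℝ (ι ⊕ κ → ℝ)).map (LinearMap.toContinuousLinearMap L)
  have hC : ∀ y, y ∈ C ↔ y ∈ L '' Ici 0 := by
    intro y
    rw [ProperCone.mem_map, ← SetLike.mem_coe, PointedCone.coe_closure,
      closure_eq_iff_isClosed.mpr] <;> simp [L.isClosed_image_Ici_zero]
  by_contra hq
  obtain ⟨φ, hφC, hφq⟩ := C.hyperplane_separation_point (x₀ := q) fun hqC => by
    obtain ⟨t, ht, htq⟩ := (hC q).mp hqC
    refine hq ⟨t ∘ Sum.inl, fun i => ht _, fun k => ?_⟩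
    rw [← htq, hL]
    simpa using ht (Sum.inr k)
  set μ : κ → ℝ := fun k => φ (Pi.single k 1)
  have hφ : ∀ y, φ y = μ ⬝ᵥ y := fun y => by
    conv_lhs => rw [← Finset.univ_sum_single y]
    simp only [map_sum, dotProduct]
    refine Finset.sum_congr rfl fun k _ => ?_
    rw [show Pi.single k (y k) = y k • Pi.single k (1 : ℝ) by
      rw [← Pi.single_smul', smul_eq_mul, mul_one], map_smul, smul_eq_mul, mul_comm]
  have hφL : ∀ x s, 0 ≤ x → 0 ≤ s → 0 ≤ μ ⬝ᵥ (M *ᵥ x + s) := fun x s hx hs => by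
    rw [← hφ]
    exact hφC _ ((hC _).mpr ⟨Sum.elim x s, Sum.nonneg_elim_iff.mpr ⟨hx, hs⟩, by simp [hL]⟩)
  have hμ : 0 ≤ μ := fun k => by
    simpa using hφL 0 (Pi.single k 1) le_rfl (Pi.single_nonneg.mpr zero_le_one)
  have hμM : 0 ≤ μ ᵥ* M := fun i => by
    simpa only [Pi.zero_apply, add_zero, dotProduct_mulVec, dotProduct_single, mul_one]
      using hφL (Pi.single i 1) 0 (Pi.single_nonneg.mpr zero_le_one) le_rfl
  exact hφq.not_ge ((hφ q).symm ▸ h μ hμ hμM)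

end ConicHull

lemma sInf_image_le_of_mem_closure_convexHull {E : Type*} [AddCommGroup E] [TopologicalSpace E]
    [Module ℝ E] {f : E →ᵃ[ℝ] ℝ} (hf : Continuous f) {X : Set E} {x : E}
    (hx : x ∈ closure (convexHull ℝ X)) : sInf ((fun y => (f y : EReal)) '' X) ≤ f x := by
  by_contra! hlt
  obtain ⟨r, hr, hrX⟩ := EReal.lt_iff_exists_real_btwn.mp hlt
  have hX : X ⊆ f ⁻¹' Ici r := fun y hy =>
    EReal.coe_le_coe_iff.mp (hrX.le.trans (sInf_le (mem_image_of_mem _ hy)))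
  have := closure_minimal (convexHull_min hX ((convex_Ici r).affine_preimage f))
    (isClosed_Ici.preimage hf) hx
  exact (EReal.coe_lt_coe_iff.mp hr).not_ge this

section Lagrangian

variable {ι κ : Type*} [Fintype ι] [Fintype κ]

def lagrangian (A : Matrix κ ι ℝ) (b : κ → ℝ) (c : ι → ℝ) (lam : κ → ℝ) :
    (ι → ℝ) →ᵃ[ℝ] ℝ where
  toFun x := c ⬝ᵥ x + lam ⬝ᵥ (b - A *ᵥ x)
  linear := dotProductBilin ℝ ℝ (c - lam ᵥ* A)
  map_vadd' x v := by
    simp [mulVec_add, dotProduct_add, dotProduct_sub, dotProduct_mulVec]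
    ring

variable (A : Matrix κ ι ℝ) (b : κ → ℝ) (c : ι → ℝ)

lemma lagrangian_le_of_feasible {lam x} (hlam : 0 ≤ lam) (hx : b ≤ A *ᵥ x) :
    lagrangian A b c lam x ≤ c ⬝ᵥ x := by
  have : lam ⬝ᵥ (b - A *ᵥ x) ≤ 0 :=
    Finset.sum_nonpos fun i _ => mul_nonpos_of_nonneg_of_nonpos (hlam i) (sub_nonpos.mpr (hx i))
  simpa [lagrangian] using this

lemma exists_nonneg_forall_convexHull_le_lagrangian (F : Finset (ι → ℝ)) {x₀ : ι → ℝ}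
    (hopt : ∀ y ∈ convexHull ℝ (F : Set (ι → ℝ)), b ≤ A *ᵥ y → c ⬝ᵥ x₀ ≤ c ⬝ᵥ y) :
    ∃ lam, 0 ≤ lam ∧ ∀ y ∈ convexHull ℝ (F : Set (ι → ℝ)), c ⬝ᵥ x₀ ≤ lagrangian A b c lam y := by
  let M : Matrix F κ ℝ := fun f => A *ᵥ f - b
  let q : F → ℝ := fun f => c ⬝ᵥ f - c ⬝ᵥ x₀
  -- After normalisation, a weighting `μ` of the vertices with `0 ≤ μ ᵥ* M` is a feasible point
  -- of the hull.
  have hdual : ∀ μ : F → ℝ, 0 ≤ μ → 0 ≤ μ ᵥ* M → 0 ≤ μ ⬝ᵥ q := by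
    intro μ hμ hμM
    set σ := ∑ f, μ f
    set w := ∑ f, μ f • (f : ι → ℝ)
    have hAw : σ • b ≤ A *ᵥ w := by
      have : μ ᵥ* M = A *ᵥ w - σ • b := by
        rw [vecMul_eq_sum]
        simp only [M, smul_sub, Finset.sum_sub_distrib, w, σ, mulVec_sum,
          mulVec_smul, Finset.sum_smul]
      rwa [this, sub_nonneg] at hμM
    have hcw : μ ⬝ᵥ q = c ⬝ᵥ w - σ * c ⬝ᵥ x₀ := by
      simp only [w, σ, dotProduct_sum, dotProduct_smul, smul_eq_mul, Finset.sum_mul,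
        ← Finset.sum_sub_distrib, ← mul_sub]
      rfl
    rw [hcw, sub_nonneg]
    rcases (Finset.sum_nonneg fun f _ => hμ f : 0 ≤ σ).eq_or_lt with hσ | hσ
    · have hμ0 : ∀ f, μ f = 0 := fun f =>
        (Finset.sum_eq_zero_iff_of_nonneg fun f _ => hμ f).mp hσ.symm f (Finset.mem_univ f)
      simp [σ, w, hμ0]
    · have hz : σ⁻¹ • w ∈ convexHull ℝ (F : Set (ι → ℝ)) :=
        Finset.univ.centerMass_mem_convexHull (fun f _ => hμ f) hσ fun f _ => f.2
      have hAz : b ≤ A *ᵥ (σ⁻¹ • w) := by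
        rwa [mulVec_smul, le_inv_smul_iff_of_pos hσ]
      have := hopt _ hz hAz
      rwa [dotProduct_smul, smul_eq_mul, le_inv_mul_iff₀ hσ] at this
  obtain ⟨lam, hlam, hM⟩ := M.exists_nonneg_mulVec_le_of_forall_vecMul_nonneg q hdual
  have hF : (F : Set (ι → ℝ)) ⊆ lagrangian A b c lam ⁻¹' Ici (c ⬝ᵥ x₀) := fun f hf => by
    have := hM ⟨f, hf⟩
    simp only [M, q, mulVec, dotProduct_comm _ lam, dotProduct_sub] at this
    simp only [lagrangian, AffineMap.coe_mk, mem_preimage, mem_Ici, dotProduct_sub]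
    linarith
  exact ⟨lam, hlam, fun y hy => convexHull_min hF ((convex_Ici _).affine_preimage _) hy⟩

lemma exists_nonneg_forall_le_lagrangian_of_inter_nhds_eq_convexHull {S U : Set (ι → ℝ)}
    {F : Finset (ι → ℝ)} {x₀ : ι → ℝ} (hS : Convex ℝ S) (hU : U ∈ 𝓝 x₀)
    (hSU : S ∩ U = convexHull ℝ (F : Set (ι → ℝ))) (hx₀ : x₀ ∈ S) (hfeas : b ≤ A *ᵥ x₀)
    (hopt : ∀ y ∈ S, b ≤ A *ᵥ y → c ⬝ᵥ x₀ ≤ c ⬝ᵥ y) :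
    ∃ lam, 0 ≤ lam ∧ ∀ y ∈ S, c ⬝ᵥ x₀ ≤ lagrangian A b c lam y := by
  have hFS : convexHull ℝ (F : Set (ι → ℝ)) ⊆ S := hSU ▸ inter_subset_left
  obtain ⟨lam, hlam, hle⟩ := exists_nonneg_forall_convexHull_le_lagrangian A b c F
    fun y hy => hopt y (hFS hy)
  have hx₀F : x₀ ∈ convexHull ℝ (F : Set (ι → ℝ)) := hSU ▸ ⟨hx₀, mem_of_mem_nhds hU⟩
  have hloc : IsLocalMinOn (lagrangian A b c lam) S x₀ := by
    filter_upwards [inter_mem_nhdsWithin S hU] with y hy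
    exact (lagrangian_le_of_feasible A b c hlam hfeas).trans (hle y (hSU ▸ hy))
  have hconv : ConvexOn ℝ S (lagrangian A b c lam) :=
    ((convexOn_id convex_univ).comp_affineMap _).subset (subset_univ _) hS
  have hmin := IsMinOn.of_isLocalMinOn_of_convexOn hx₀ hloc hconv
  exact ⟨lam, hlam, fun y hy => (hle x₀ hx₀F).trans (hmin hy)⟩

end Lagrangian

theorem geoffrion_locally_polyhedral {m n : ℕ} (A : Matrix (Fin m) (Fin n) ℝ)
    (b : Fin m → ℝ) (c : Fin n → ℝ) (X : Set (Fin n → ℝ))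
    (hloc : ∀ l u : Fin n → ℝ, ∃ F : Finset (Fin n → ℝ),
      closure (convexHull ℝ X) ∩ Set.Icc l u = convexHull ℝ (F : Set (Fin n → ℝ)))
    (xstar : Fin n → ℝ)
    (hxstar : xstar ∈ closure (convexHull ℝ X) ∧ b ≤ A.mulVec xstar ∧
      ∀ x ∈ closure (convexHull ℝ X), b ≤ A.mulVec x → c ⬝ᵥ xstar ≤ c ⬝ᵥ x) :
    sSup ((fun lam =>
        sInf ((fun x => ((c ⬝ᵥ x + lam ⬝ᵥ (b - A.mulVec x) : ℝ) : EReal)) '' X)) ''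
          {lam : Fin m → ℝ | 0 ≤ lam}) = ((c ⬝ᵥ xstar : ℝ) : EReal) := by
  obtain ⟨hx₀, hfeas, hopt⟩ := hxstar
  obtain ⟨F, hF⟩ := hloc (xstar - 1) (xstar + 1)
  have hbox : Icc (xstar - 1) (xstar + 1) ∈ 𝓝 xstar :=
    pi_Icc_mem_nhds (fun _ => by simp) (fun _ => by simp)
  obtain ⟨lam, hlam, hle⟩ := exists_nonneg_forall_le_lagrangian_of_inter_nhds_eq_convexHull A b c
    (convex_convexHull ℝ X).closure hbox hF hx₀ hfeas hopt
  apply le_antisymm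
  · refine sSup_le ?_
    rintro _ ⟨lam', hlam', rfl⟩
    calc _ ≤ ((lagrangian A b c lam' xstar : ℝ) : EReal) :=
          sInf_image_le_of_mem_closure_convexHull (AffineMap.continuous_of_finiteDimensional _) hx₀
      _ ≤ _ := EReal.coe_le_coe (lagrangian_le_of_feasible A b c hlam' hfeas)
  · refine le_sSup_of_le ⟨lam, hlam, rfl⟩ (le_sInf ?_)
    rintro _ ⟨y, hy, rfl⟩
    exact EReal.coe_le_coe (hle y (subset_closure (subset_convexHull ℝ X hy)))
end

section
/- For every subset X ⊆ ℤ², the closed convex hull closure(conv X) is locally polyhedral: its intersection with every box (product of two compact intervals) in ℝ² is a polytope. -/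
/-!
An extreme point `x` of `C = closure (conv X)` lies in `X` when `X` is locally finite: near `x`,
`conv X` is contained in the convex hull of the compact set formed by the points of `X` in a ball
around `x` and the points of `C` on its boundary sphere, and `x` is an extreme point of that hull,
so it lies in the generating set. Now cut `C` with a box `B`. An extreme point of `C ∩ B` in the
interior of `B` is extreme in `C`, hence one of the finitely many lattice points of `B`; on each of
the four edge lines of `B` any set has at most two extreme points. So `C ∩ B` is a compact
convex set with finitely many extreme points, and Krein–Milman makes it their convex hull.
-/

open Set Function Metric Filter Topology

theorem isCompact_convexHull {E : Type*} [AddCommGroup E] [Module ℝ E] [TopologicalSpace E]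
    [IsTopologicalAddGroup E] [ContinuousSMul ℝ E] [FiniteDimensional ℝ E] {s : Set E}
    (hs : IsCompact s) : IsCompact (convexHull ℝ s) := by
  rcases s.eq_empty_or_nonempty with rfl | ⟨z₀, hz₀⟩
  · simp
  set n := Module.finrank ℝ E + 1
  -- Carathéodory: a point of the hull is a convex combination of at most `n` points of `s`,
  -- padded here to exactly `n` points with zero weights.
  suffices convexHull ℝ s =
      (fun q : (Fin n → ℝ) × (Fin n → E) => ∑ i, q.1 i • q.2 i) ''
        (stdSimplex ℝ (Fin n) ×ˢ univ.pi fun _ => s) by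
    rw [this]
    exact ((isCompact_stdSimplex ℝ _).prod (isCompact_univ_pi fun _ => hs)).image (by fun_prop)
  refine Subset.antisymm (fun x hx => ?_) ?_
  · obtain ⟨ι, _, z, w, hzs, hz, hw₀, hw₁, rfl⟩ := eq_pos_convex_span_of_mem_convexHull hx
    obtain ⟨e⟩ : Nonempty (ι ↪ Fin n) := Function.Embedding.nonempty_of_card_le <| by
      simpa using hz.card_le_finrank_succ.trans (Nat.succ_le_succ (Submodule.finrank_le _))
    have extend_zero {j} (hj : j ∉ range e) : extend e w 0 j = 0 := extend_apply' _ _ _ hj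
    refine ⟨(extend e w 0, extend e z fun _ => z₀), ⟨⟨fun j => ?_, ?_⟩, fun j _ => ?_⟩, ?_⟩
    · by_cases hj : ∃ i, e i = j
      · obtain ⟨i, rfl⟩ := hj
        simpa [e.injective.extend_apply] using (hw₀ i).le
      · simp [extend_apply' _ _ _ hj]
    · rw [← hw₁]
      exact (Fintype.sum_of_injective e e.injective _ _ (fun j => extend_zero)
        fun i => (e.injective.extend_apply ..).symm).symm
    · by_cases hj : ∃ i, e i = j
      · obtain ⟨i, rfl⟩ := hj
        simpa [e.injective.extend_apply] using hzs (mem_range_self i)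
      · simpa [extend_apply' _ _ _ hj] using hz₀
    · exact (Fintype.sum_of_injective e e.injective _ _ (fun j hj => by simp [extend_zero hj])
        fun i => by simp [e.injective.extend_apply]).symm
  · rintro _ ⟨⟨w, z⟩, ⟨⟨hw₀, hw₁⟩, hz⟩, rfl⟩
    exact (convex_convexHull ℝ s).sum_mem (fun i _ => hw₀ i) hw₁
      fun i _ => subset_convexHull ℝ s (hz i trivial)

section Normed
variable {E : Type*} [NormedAddCommGroup E] [NormedSpace ℝ E]

lemma exists_mem_sphere_wbtw {a p x : E} {r : ℝ} (ha : r ≤ dist a x) (hp : dist p x < r) :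
    ∃ q ∈ sphere x r, Wbtw ℝ a q p := by
  obtain ⟨q, hq, hqr⟩ := (convex_segment a p).isPreconnected.intermediate_value
    (right_mem_segment ℝ a p) (left_mem_segment ℝ a p)
    (continuous_id.dist continuous_const).continuousOn ⟨hp.le, ha⟩
  exact ⟨q, hqr, mem_segment_iff_wbtw.1 hq⟩

lemma convexHull_inter_ball_subset {X C : Set E} (hC : Convex ℝ C) (hXC : X ⊆ C) (x : E)
    (r : ℝ) :
    convexHull ℝ X ∩ ball x r ⊆ convexHull ℝ (X ∩ closedBall x r ∪ C ∩ sphere x r) := by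
  set T := convexHull ℝ (X ∩ closedBall x r ∪ C ∩ sphere x r)
  -- `D` is convex because a segment through the ball can be cut where it leaves the ball.
  set D := {y ∈ C | y ∈ ball x r → y ∈ T}
  have clip : ∀ a ∈ D, ∀ p ∈ C ∩ ball x r, ∃ q ∈ T, Wbtw ℝ a q p := by
    rintro a ⟨haC, haT⟩ p ⟨hpC, hpr⟩
    by_cases har : a ∈ ball x r
    · exact ⟨a, haT har, wbtw_self_left ℝ a p⟩
    obtain ⟨q, hqr, hq⟩ := exists_mem_sphere_wbtw (not_lt.1 har) hpr
    have hqC : q ∈ C := hC.segment_subset haC hpC (mem_segment_iff_wbtw.2 hq)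
    exact ⟨q, subset_convexHull ℝ _ (Or.inr ⟨hqC, hqr⟩), hq⟩
  have hD : Convex ℝ D := by
    rw [convex_iff_segment_subset]
    rintro a ha b hb p hp
    have hpC : p ∈ C := hC.segment_subset ha.1 hb.1 hp
    refine ⟨hpC, fun hpr => ?_⟩
    obtain ⟨a', ha'T, ha'⟩ := clip a ha p ⟨hpC, hpr⟩
    obtain ⟨b', hb'T, hb'⟩ := clip b hb p ⟨hpC, hpr⟩
    have h : Wbtw ℝ b' p a' :=
      ((mem_segment_iff_wbtw.1 hp).trans_left_right ha').symm.trans_left_right hb'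
    exact (convex_convexHull ℝ _).segment_subset hb'T ha'T (mem_segment_iff_wbtw.2 h)
  have hXD : X ⊆ D := fun y hy =>
    ⟨hXC hy, fun hyr => subset_convexHull ℝ _ (Or.inl ⟨hy, ball_subset_closedBall hyr⟩)⟩
  exact fun y ⟨hy, hyr⟩ => (convexHull_min hXD hD hy).2 hyr

theorem mem_of_mem_extremePoints_closure_convexHull [FiniteDimensional ℝ E] {X : Set E} {x : E}
    {r : ℝ} (hr : 0 < r) (hX : IsCompact (X ∩ closedBall x r))
    (hx : x ∈ (closure (convexHull ℝ X)).extremePoints ℝ) : x ∈ X := by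
  set C := closure (convexHull ℝ X)
  set t := X ∩ closedBall x r ∪ C ∩ sphere x r
  have htC : t ⊆ C :=
    union_subset (fun y hy => subset_closure (subset_convexHull ℝ X hy.1)) inter_subset_left
  have hT : IsCompact (convexHull ℝ t) :=
    isCompact_convexHull (hX.union ((isCompact_sphere x r).inter_left isClosed_closure))
  have hxT : x ∈ convexHull ℝ t := by
    have : x ∈ closure (ball x r ∩ convexHull ℝ X) :=
      isOpen_ball.inter_closure ⟨mem_ball_self hr, hx.1⟩
    rw [inter_comm] at this
    exact hT.isClosed.closure_subset
      (closure_mono (convexHull_inter_ball_subset (convex_convexHull ℝ X).closure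
        ((subset_convexHull ℝ X).trans subset_closure) x r) this)
  have hxt : x ∈ (convexHull ℝ t).extremePoints ℝ :=
    inter_extremePoints_subset_extremePoints_of_subset
      (convexHull_min htC (convex_convexHull ℝ X).closure) ⟨hxT, hx⟩
  rcases extremePoints_convexHull_subset hxt with hxX | hxS
  · exact hxX.1
  · exact absurd hxS.2 (by simp [hr.ne])

end Normed

theorem Convex.mem_extremePoints_of_mem_extremePoints_inter {E : Type*} [AddCommGroup E]
    [Module ℝ E] [TopologicalSpace E] [ContinuousAdd E] [ContinuousSMul ℝ E] {C B : Set E} {x : E}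
    (hC : Convex ℝ C) (hB : B ∈ 𝓝 x) (hx : x ∈ (C ∩ B).extremePoints ℝ) :
    x ∈ C.extremePoints ℝ := by
  refine ⟨hx.1.1, fun y hy z hz ⟨a, b, ha, hb, hab, hxyz⟩ => ?_⟩
  have near (v : E) : ∀ᶠ ε in 𝓝[>] (0 : ℝ), x + ε • (v - x) ∈ B :=
    nhdsWithin_le_nhds <| (Continuous.tendsto' (by fun_prop) 0 x (by simp)) hB
  obtain ⟨ε, hyε, hzε, hε0, hε1⟩ :=
    ((near y).and ((near z).and (Ioc_mem_nhdsGT one_pos))).exists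
  have hseg : x ∈ openSegment ℝ (x + ε • (y - x)) (x + ε • (z - x)) := by
    refine ⟨a, b, ha, hb, hab, ?_⟩
    linear_combination (norm := module) ε • hxyz + hab • ((1 - ε) • x)
  have hy' := hx.2 ⟨hC.add_smul_sub_mem hx.1.1 hy ⟨hε0.le, hε1⟩, hyε⟩
    ⟨hC.add_smul_sub_mem hx.1.1 hz ⟨hε0.le, hε1⟩, hzε⟩ hseg
  simpa [hε0.ne', sub_eq_zero] using hy'

lemma Real.extremePoints_subset (S : Set ℝ) :
    S.extremePoints ℝ ⊆ {x | IsLeast S x} ∪ {x | IsGreatest S x} := by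
  intro x hx
  by_contra h
  simp only [mem_union, mem_ofPred_eq, IsLeast, IsGreatest, hx.1, true_and, mem_lowerBounds,
    mem_upperBounds, not_or, not_forall, not_le] at h
  obtain ⟨⟨y, hy, hyx⟩, ⟨z, hz, hxz⟩⟩ := h
  exact hyx.ne (hx.2 hy hz (by rw [openSegment_eq_Ioo (hyx.trans hxz)]; exact ⟨hyx, hxz⟩))

lemma Real.finite_extremePoints (S : Set ℝ) : (S.extremePoints ℝ).Finite := by
  have hleast : {x | IsLeast S x}.Subsingleton := fun _ h _ h' => h.unique h'
  have hgreatest : {x | IsGreatest S x}.Subsingleton := fun _ h _ h' => h.unique h'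
  exact (hleast.finite.union hgreatest.finite).subset (Real.extremePoints_subset S)

lemma preimage_extremePoints_subset {E F : Type*} [AddCommGroup E] [Module ℝ E] [AddCommGroup F]
    [Module ℝ F] {f : F →ᵃ[ℝ] E} (hf : Injective f) (A : Set E) :
    f ⁻¹' A.extremePoints ℝ ⊆ (f ⁻¹' A).extremePoints ℝ :=
  fun _ hx => ⟨hx.1, fun _ ha _ hb hab =>
    hf (hx.2 ha hb (image_openSegment ℝ f _ _ ▸ mem_image_of_mem f hab))⟩

lemma finite_extremePoints_inter_range {E : Type*} [AddCommGroup E] [Module ℝ E]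
    {f : ℝ →ᵃ[ℝ] E} (hf : Injective f) (A : Set E) : (A.extremePoints ℝ ∩ range f).Finite :=
  ((Real.finite_extremePoints (f ⁻¹' A)).image f).subset fun _ ⟨hx, t, ht⟩ =>
    ⟨t, preimage_extremePoints_subset hf A (by simpa [ht] using hx), ht⟩

lemma finite_extremePoints_inter_fst_eq (A : Set (ℝ × ℝ)) (c : ℝ) :
    (A.extremePoints ℝ ∩ {p | p.1 = c}).Finite :=
  (finite_extremePoints_inter_range (AffineMap.lineMap_injective ℝ (p₀ := (c, 0)) (p₁ := (c, 1))
    (by simp)) A).subset fun p ⟨hp, hpc⟩ =>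
      ⟨hp, p.2, by ext <;> simp [AffineMap.lineMap_apply, ← hpc.out]⟩

lemma finite_extremePoints_inter_snd_eq (A : Set (ℝ × ℝ)) (c : ℝ) :
    (A.extremePoints ℝ ∩ {p | p.2 = c}).Finite :=
  (finite_extremePoints_inter_range (AffineMap.lineMap_injective ℝ (p₀ := (0, c)) (p₁ := (1, c))
    (by simp)) A).subset fun p ⟨hp, hpc⟩ =>
      ⟨hp, p.1, by ext <;> simp [AffineMap.lineMap_apply, ← hpc.out]⟩

lemma finite_intPoints_inter {s : Set (ℝ × ℝ)} (hs : Bornology.IsBounded s) :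
    ({p : ℝ × ℝ | ∃ a b : ℤ, p = ((a : ℝ), (b : ℝ))} ∩ s).Finite := by
  obtain ⟨⟨l, hl⟩, ⟨u, hu⟩⟩ := isBounded_iff_bddBelow_bddAbove.1 hs
  refine ((finite_Icc (⌈l.1⌉, ⌈l.2⌉) (⌊u.1⌋, ⌊u.2⌋)).image
    fun ab : ℤ × ℤ => ((ab.1 : ℝ), (ab.2 : ℝ))).subset ?_
  rintro _ ⟨⟨a, b, rfl⟩, hp⟩
  obtain ⟨⟨h1, h2⟩, ⟨h3, h4⟩⟩ := And.intro (hl hp) (hu hp)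
  exact ⟨(a, b), ⟨⟨Int.ceil_le.2 h1, Int.ceil_le.2 h2⟩, ⟨Int.le_floor.2 h3, Int.le_floor.2 h4⟩⟩,
    rfl⟩

lemma Icc_mem_nhds_or_coord_eq {l u x : ℝ × ℝ} (hx : x ∈ Icc l u) :
    Icc l u ∈ 𝓝 x ∨ x.1 = l.1 ∨ x.1 = u.1 ∨ x.2 = l.2 ∨ x.2 = u.2 := by
  by_contra! h
  obtain ⟨hbox, h1, h2, h3, h4⟩ := h
  obtain ⟨⟨hl1, hl2⟩, ⟨hu1, hu2⟩⟩ := hx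
  refine hbox ?_
  rw [Icc_prod_eq, ← Prod.mk.eta (p := x)]
  exact prod_mem_nhds (Icc_mem_nhds (hl1.lt_of_ne' h1) (hu1.lt_of_ne h2))
    (Icc_mem_nhds (hl2.lt_of_ne' h3) (hu2.lt_of_ne h4))

lemma finite_extremePoints_closure_convexHull_inter_Icc {X : Set (ℝ × ℝ)}
    (hX : X ⊆ {p : ℝ × ℝ | ∃ a b : ℤ, p = ((a : ℝ), (b : ℝ))}) (l u : ℝ × ℝ) :
    ((closure (convexHull ℝ X) ∩ Icc l u).extremePoints ℝ).Finite := by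
  set K := closure (convexHull ℝ X) ∩ Icc l u
  have hXfin {s : Set (ℝ × ℝ)} (hs : Bornology.IsBounded s) : (X ∩ s).Finite :=
    (finite_intPoints_inter hs).subset (inter_subset_inter_left s hX)
  refine ((hXfin (isBounded_Icc l u)).union <| (finite_extremePoints_inter_fst_eq K l.1).union <|
    (finite_extremePoints_inter_fst_eq K u.1).union <|
    (finite_extremePoints_inter_snd_eq K l.2).union (finite_extremePoints_inter_snd_eq K u.2)).subset
    fun x hx => ?_
  rcases Icc_mem_nhds_or_coord_eq hx.1.2 with hbox | h | h | h | h
  · have hxC := (convex_convexHull ℝ X).closure.mem_extremePoints_of_mem_extremePoints_inter hbox hx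
    exact Or.inl ⟨mem_of_mem_extremePoints_closure_convexHull one_pos
      (hXfin (isBounded_closedBall (x := x) (r := 1))).isCompact hxC, hx.1.2⟩
  all_goals simp [hx, h]

lemma IsCompact.exists_finset_eq_convexHull {E : Type*} [AddCommGroup E] [Module ℝ E]
    [TopologicalSpace E] [T2Space E] [IsTopologicalAddGroup E] [ContinuousSMul ℝ E]
    [LocallyConvexSpace ℝ E] {K : Set E} (hK : IsCompact K) (hKconv : Convex ℝ K)
    (hext : (K.extremePoints ℝ).Finite) : ∃ F : Finset E, K = convexHull ℝ (F : Set E) := by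
  have hKM := closure_convexHull_extremePoints hK hKconv
  rw [(hext.isClosed_convexHull ℝ).closure_eq] at hKM
  exact ⟨hext.toFinset, by rw [hext.coe_toFinset, hKM]⟩

theorem closed_convexHull_locally_polyhedral_dim2
    (X : Set (ℝ × ℝ))
    (hX : X ⊆ {p : ℝ × ℝ | ∃ a b : ℤ, p = ((a : ℝ), (b : ℝ))}) :
    ∀ l u : ℝ × ℝ, ∃ F : Finset (ℝ × ℝ),
      closure (convexHull ℝ X) ∩ Set.Icc l u = convexHull ℝ (F : Set (ℝ × ℝ)) := fun l u =>
  (isCompact_Icc.inter_left isClosed_closure).exists_finset_eq_convexHull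
    ((convex_convexHull ℝ X).closure.inter (convex_Icc l u))
    (finite_extremePoints_closure_convexHull_inter_Icc hX l u)
end

section
/- Let X ⊆ ℝ^n be a closed set. Then every extreme point of closure(conv X) belongs to X. -/
/-!
Localize at the extreme point `x` of `K = closure (conv X)`. If `y ∈ conv X` lies in the closed
unit ball `B` around `x`, replace every point `p ∈ X` outside `B` by the point where the segment
`[y, p]` leaves `B`; after reweighting, `y` is still a convex combination of the new points. Hence
`conv X ∩ B ⊆ conv Y` with `Y = (X ∩ B) ∪ (K ∩ ∂B)` compact. By Carathéodory `conv Y` is compact,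
so `x ∈ conv Y ⊆ K`, and `x` is an extreme point of `conv Y`, hence lies in `Y`; being the centre of
`B`, it is not on `∂B`, so `x ∈ X`.
-/

open Set Metric Module

section Algebra

variable {𝕜 E : Type*} [Field 𝕜] [LinearOrder 𝕜] [IsStrictOrderedRing 𝕜]
  [AddCommGroup E] [Module 𝕜 E]

theorem convexHull_range_eq_image_stdSimplex {ι : Type*} [Fintype ι] (z : ι → E) :
    convexHull 𝕜 (range z) = Fintype.linearCombination 𝕜 z '' stdSimplex 𝕜 ι := by
  classical
  rw [← convexHull_rangle_single_eq_stdSimplex, LinearMap.image_convexHull, ← range_comp]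
  congr 2
  ext i
  simp [Fintype.linearCombination_apply_single]

theorem exists_fin_finrank_succ_mem_convexHull_range [FiniteDimensional 𝕜 E] {s : Set E}
    {x : E} (hx : x ∈ convexHull 𝕜 s) :
    ∃ z : Fin (finrank 𝕜 E + 1) → E, range z ⊆ s ∧ x ∈ convexHull 𝕜 (range z) := by
  rw [convexHull_eq_union] at hx
  simp only [mem_iUnion] at hx
  obtain ⟨t, hts, hind, hxt⟩ := hx
  obtain ⟨x₀, hx₀⟩ : t.Nonempty := by simpa using (convexHull_nonempty_iff (𝕜 := 𝕜)).1 ⟨x, hxt⟩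
  have hcard : t.toList.length ≤ finrank 𝕜 E + 1 := by
    simpa using hind.card_le_finrank_succ.trans (Nat.add_le_add_right (Submodule.finrank_le _) 1)
  refine ⟨fun i => t.toList.getD i x₀, ?_, convexHull_mono ?_ hxt⟩
  · rintro _ ⟨i, rfl⟩
    refine hts ?_
    change t.toList.getD i x₀ ∈ t
    by_cases hi : (i : ℕ) < t.toList.length
    · rw [List.getD_eq_getElem _ _ hi]
      exact Finset.mem_toList.1 (List.getElem_mem hi)
    · rwa [List.getD_eq_default _ _ (not_lt.1 hi)]
  · intro p hp
    obtain ⟨i, hi, rfl⟩ := List.mem_iff_getElem.1 (Finset.mem_toList.2 hp)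
    exact ⟨⟨i, hi.trans_le hcard⟩, List.getD_eq_getElem _ _ hi⟩

theorem mem_convexHull_image_lineMap {s : Set E} {y : E} (hy : y ∈ convexHull 𝕜 s)
    (t : E → 𝕜) (ht : ∀ p ∈ s, 0 < t p) :
    y ∈ convexHull 𝕜 ((fun p => AffineMap.lineMap y p (t p)) '' s) := by
  obtain ⟨ι, _, w, z, hw₀, hw₁, hz, hwz⟩ := mem_convexHull_iff_exists_fintype.1 hy
  -- `w' i • (lineMap y (z i) (t (z i)) - y) = w i • (z i - y)`, which sums to `0`.
  set w' : ι → 𝕜 := fun i => w i / t (z i)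
  have hw'₀ : ∀ i, 0 ≤ w' i := fun i => div_nonneg (hw₀ i) (ht _ (hz i)).le
  have hw'pos : 0 < ∑ i, w' i := by
    obtain ⟨i, -, hi⟩ := Finset.exists_ne_zero_of_sum_ne_zero (hw₁.symm ▸ one_ne_zero)
    exact Finset.sum_pos' (fun i _ => hw'₀ i)
      ⟨i, Finset.mem_univ _, div_pos ((hw₀ i).lt_of_ne' hi) (ht _ (hz i))⟩
  have hterm (i : ι) :
      w' i • AffineMap.lineMap y (z i) (t (z i)) = w' i • y + (w i • z i - w i • y) := by
    have := (ht _ (hz i)).ne'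
    simp only [w', AffineMap.lineMap_apply_module]
    match_scalars
    · field_simp
      ring
    · field_simp
  have hcm : Finset.univ.centerMass w' (fun i => AffineMap.lineMap y (z i) (t (z i))) = y := by
    rw [Finset.centerMass, Finset.sum_congr rfl fun i _ => hterm i, Finset.sum_add_distrib,
      Finset.sum_sub_distrib, ← Finset.sum_smul, ← Finset.sum_smul, hwz, hw₁, one_smul, sub_self,
      add_zero, smul_smul, inv_mul_cancel₀ hw'pos.ne', one_smul]
  have hmem := Finset.univ.centerMass_mem_convexHull (fun i _ => hw'₀ i) hw'pos
    fun i _ => mem_image_of_mem (fun p => AffineMap.lineMap y p (t p)) (hz i)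
  rwa [hcm] at hmem

end Algebra

theorem IsCompact.convexHull {E : Type*} [AddCommGroup E] [Module ℝ E] [TopologicalSpace E]
    [IsTopologicalAddGroup E] [ContinuousSMul ℝ E] [FiniteDimensional ℝ E] {s : Set E}
    (hs : IsCompact s) : IsCompact (_root_.convexHull ℝ s) := by
  have hhull : _root_.convexHull ℝ s =
      (fun wz : (Fin (finrank ℝ E + 1) → ℝ) × (Fin (finrank ℝ E + 1) → E) =>
        ∑ i, wz.1 i • wz.2 i) '' (stdSimplex ℝ _ ×ˢ univ.pi fun _ => s) := by
    ext x
    constructor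
    · intro hx
      obtain ⟨z, hzs, hxz⟩ := exists_fin_finrank_succ_mem_convexHull_range hx
      rw [convexHull_range_eq_image_stdSimplex] at hxz
      obtain ⟨w, hw, rfl⟩ := hxz
      exact ⟨(w, z), ⟨hw, fun i _ => hzs (mem_range_self i)⟩,
        (Fintype.linearCombination_apply ..).symm⟩
    · rintro ⟨⟨w, z⟩, ⟨hw, hz⟩, rfl⟩
      exact mem_convexHull_of_exists_fintype w z hw.1 hw.2 (fun i => hz i (mem_univ i)) rfl
  rw [hhull]
  exact ((isCompact_stdSimplex ℝ _).prod (isCompact_univ_pi fun _ => hs)).image (by fun_prop)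

section Normed

variable {E : Type*} [NormedAddCommGroup E] [NormedSpace ℝ E]

theorem exists_lineMap_mem_sphere {x y p : E} {r : ℝ} (hy : dist y x < r) (hp : r < dist p x) :
    ∃ θ ∈ Ioo (0 : ℝ) 1, AffineMap.lineMap y p θ ∈ sphere x r :=
  intermediate_value_Ioo zero_le_one (f := fun θ : ℝ => dist (AffineMap.lineMap y p θ) x)
    (by fun_prop) (by simpa using And.intro hy hp)

theorem convexHull_inter_closedBall_subset (s : Set E) (x : E) (r : ℝ) :
    convexHull ℝ s ∩ closedBall x r ⊆
      convexHull ℝ (s ∩ closedBall x r ∪ convexHull ℝ s ∩ sphere x r) := by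
  rintro y ⟨hys, hyr⟩
  rcases (mem_closedBall.1 hyr).eq_or_lt with hyr | hyr
  · exact subset_convexHull ℝ _ (Or.inr ⟨hys, hyr⟩)
  have hpush : ∀ p ∈ s, ∃ θ : ℝ, 0 < θ ∧
      AffineMap.lineMap y p θ ∈ s ∩ closedBall x r ∪ convexHull ℝ s ∩ sphere x r := by
    intro p hp
    by_cases hpr : dist p x ≤ r
    · exact ⟨1, one_pos, Or.inl (by simpa using And.intro hp hpr)⟩
    obtain ⟨θ, hθ, hθr⟩ := exists_lineMap_mem_sphere hyr (not_le.1 hpr)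
    exact ⟨θ, hθ.1, Or.inr ⟨(convex_convexHull ℝ s).lineMap_mem hys (subset_convexHull ℝ s hp)
      (Ioo_subset_Icc_self hθ), hθr⟩⟩
  choose! θ hθpos hθmem using hpush
  refine convexHull_mono ?_ (mem_convexHull_image_lineMap hys θ hθpos)
  rintro _ ⟨p, hp, rfl⟩
  exact hθmem p hp

theorem IsClosed.extremePoints_closure_convexHull_subset [FiniteDimensional ℝ E] {X : Set E}
    (hX : IsClosed X) : extremePoints ℝ (closure (convexHull ℝ X)) ⊆ X := by
  intro x hx
  set K := closure (convexHull ℝ X)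
  set Y := X ∩ closedBall x 1 ∪ K ∩ sphere x 1
  have hYcompact : IsCompact Y :=
    ((isCompact_closedBall x 1).inter_left hX).union
      ((isCompact_sphere x 1).inter_left isClosed_closure)
  have hYK : convexHull ℝ Y ⊆ K := by
    refine convexHull_min (union_subset ?_ inter_subset_left) (convex_convexHull ℝ X).closure
    exact inter_subset_left.trans ((subset_convexHull ℝ X).trans subset_closure)
  have hxY : x ∈ convexHull ℝ Y := by
    have hxloc : x ∈ closure (convexHull ℝ X ∩ closedBall x 1) := by
      rw [inter_comm]
      exact closure_mono (inter_subset_inter_left _ ball_subset_closedBall)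
        (isOpen_ball.inter_closure ⟨mem_ball_self one_pos, hx.1⟩)
    rw [← hYcompact.convexHull.isClosed.closure_eq]
    refine closure_mono ((convexHull_inter_closedBall_subset X x 1).trans ?_) hxloc
    exact convexHull_mono (union_subset_union_right _ (inter_subset_inter_left _ subset_closure))
  have hxext : x ∈ extremePoints ℝ (convexHull ℝ Y) :=
    inter_extremePoints_subset_extremePoints_of_subset hYK ⟨hxY, hx⟩
  rcases extremePoints_convexHull_subset hxext with ⟨hxX, -⟩ | ⟨-, hxsphere⟩
  · exact hxX
  · simp at hxsphere

end Normed

theorem extremePoints_closed_convexHull_subset {n : ℕ}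
    (X : Set (Fin n → ℝ)) (hX : IsClosed X) :
    Set.extremePoints ℝ (closure (convexHull ℝ X)) ⊆ X :=
  hX.extremePoints_closure_convexHull_subset
end

section
/- Suppose the system Ax ≥ b consists of a single constraint a·x ≥ b with a ∈ ℤ^n and b ∈ ℤ, and X ⊆ ℤ^n is such that inf { c·x : x ∈ X } is finite. Then v^L = v̄* = v*, where v^L = sup_{λ≥0} inf_{x∈X}(c·x + λ(b − a·x)), v* = inf { c·x : a·x ≥ b, x ∈ conv X }, and v̄* = inf { c·x : a·x ≥ b, x ∈ closure(conv X) }. -/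
/-!
Weak duality holds because the Lagrangian is affine, so its infimum over `X` is also a lower bound
on the closed convex hull. For the reverse inequality take any `t` below the primal value `v*` and
look for a multiplier `λ ≥ 0` with `t ≤ c·x + λ (b - a·x)` on `X`. Infeasible points `w` demand
`λ ≥ (t - c·w) / (b - a·w)`, feasible points `u` with `a·u > b` demand `λ ≤ (c·u - t) / (a·u - b)`,
and every lower bound is below every upper bound because the point of the segment `[u, w]` on the
hyperplane `a·x = b` is feasible in `conv X`. The lower bounds are bounded, by `max 0 (t - r)` with
`r = inf c·X`, only because `b - a·w ≥ 1` for integral infeasible `w`; their supremum is the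
multiplier.
-/

open Matrix Set

section LagrangianDuality

variable {E : Type*} [AddCommGroup E] [Module ℝ E]

noncomputable def lagrangianDual (X : Set E) (f a : E →ₗ[ℝ] ℝ) (b lam : ℝ) : EReal :=
  sInf ((fun x => ((f x + lam * (b - a x) : ℝ) : EReal)) '' X)

noncomputable def constrainedInf (S : Set E) (f a : E →ₗ[ℝ] ℝ) (b : ℝ) : EReal :=
  sInf ((fun x => ((f x : ℝ) : EReal)) '' {x ∈ S | b ≤ a x})

variable {X : Set E} {f a : E →ₗ[ℝ] ℝ} {b : ℝ}

theorem constrainedInf_anti {S T : Set E} (hST : S ⊆ T) :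
    constrainedInf T f a b ≤ constrainedInf S f a b :=
  sInf_le_sInf (image_mono fun _ hy => ⟨hST hy.1, hy.2⟩)

section Weak

variable [TopologicalSpace E]

theorem le_of_forall_le_of_mem_closure_convexHull {φ : E →ₗ[ℝ] ℝ} (hφ : Continuous φ) {s : ℝ}
    (hs : ∀ x ∈ X, s ≤ φ x) {y : E} (hy : y ∈ closure (convexHull ℝ X)) : s ≤ φ y :=
  closure_minimal (convexHull_min hs (convex_halfSpace_ge φ.isLinear s))
    (isClosed_le continuous_const hφ) hy

theorem lagrangianDual_le_of_mem_closure_convexHull (hf : Continuous f) (ha : Continuous a)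
    (lam : ℝ) {y : E} (hy : y ∈ closure (convexHull ℝ X)) :
    lagrangianDual X f a b lam ≤ ((f y + lam * (b - a y) : ℝ) : EReal) := by
  by_contra! hlt
  obtain ⟨s, hys, hs⟩ := EReal.lt_iff_exists_real_btwn.1 hlt
  have hφ : ∀ z, (f - lam • a) z = f z + lam * (b - a z) - lam * b := fun z => by
    simp only [LinearMap.sub_apply, LinearMap.smul_apply, smul_eq_mul]; ring
  have hX : ∀ x ∈ X, s - lam * b ≤ (f - lam • a) x := fun x hx => by
    have := EReal.coe_le_coe_iff.1 (hs.le.trans (sInf_le ⟨x, hx, rfl⟩))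
    rw [hφ]; linarith
  have := le_of_forall_le_of_mem_closure_convexHull (hf.sub (ha.const_smul lam)) hX hy
  rw [hφ] at this
  exact hys.not_ge (EReal.coe_le_coe_iff.2 (by linarith))

theorem sSup_lagrangianDual_le (hf : Continuous f) (ha : Continuous a) :
    sSup (lagrangianDual X f a b '' Ici 0) ≤ constrainedInf (closure (convexHull ℝ X)) f a b := by
  refine sSup_le ?_
  rintro _ ⟨lam, hlam, rfl⟩
  refine le_sInf ?_
  rintro _ ⟨y, ⟨hy, hby⟩, rfl⟩
  refine (lagrangianDual_le_of_mem_closure_convexHull hf ha lam hy).trans ?_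
  exact EReal.coe_le_coe_iff.2 (by nlinarith [mem_Ici.1 hlam])

end Weak

/-- The value of `f` where the segment `[w, u]` meets the hyperplane `a = b` is at least `t`,
after clearing denominators. -/
theorem mul_le_mul_of_segment_crossing {t : ℝ}
    (ht : ∀ z ∈ convexHull ℝ X, b ≤ a z → t ≤ f z) {u w : E} (hu : u ∈ X) (hw : w ∈ X)
    (hbu : b ≤ a u) (hwb : a w < b) :
    (t - f w) * (a u - b) ≤ (f u - t) * (b - a w) := by
  set p := b - a w
  set q := a u - b
  have hpq : 0 < p + q := by linarith [sub_pos.2 hwb]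
  set z := (p / (p + q)) • u + (q / (p + q)) • w
  have hz : z ∈ convexHull ℝ X :=
    convex_convexHull ℝ X (subset_convexHull ℝ X hu) (subset_convexHull ℝ X hw)
      (div_nonneg (by linarith) hpq.le) (div_nonneg (by linarith) hpq.le)
      (by rw [← add_div, div_self hpq.ne'])
  have hval : ∀ φ : E →ₗ[ℝ] ℝ, φ z = (p * φ u + q * φ w) / (p + q) := fun φ => by
    simp only [z, map_add, map_smul, smul_eq_mul]; field_simp
  have haz : b ≤ a z := by
    rw [hval, le_div_iff₀ hpq]; simp only [p, q]; nlinarith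
  have := ht z hz haz
  rw [hval, le_div_iff₀ hpq] at this
  nlinarith

theorem exists_nonneg_forall_le_lagrangian {r t : ℝ} (hr : ∀ x ∈ X, r ≤ f x)
    (hint : ∀ x ∈ X, a x < b → 1 ≤ b - a x)
    (ht : ∀ z ∈ convexHull ℝ X, b ≤ a z → t ≤ f z) :
    ∃ lam, 0 ≤ lam ∧ ∀ x ∈ X, t ≤ f x + lam * (b - a x) := by
  set S := insert 0 ((fun w => (t - f w) / (b - a w)) '' {w ∈ X | a w < b})
  have hS : BddAbove S := by
    refine ⟨max 0 (t - r), ?_⟩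
    rintro _ (rfl | ⟨w, ⟨hw, hwb⟩, rfl⟩)
    · exact le_max_left _ _
    · rw [div_le_iff₀ (sub_pos.2 hwb)]
      nlinarith [hr w hw, hint w hw hwb, le_max_left 0 (t - r), le_max_right 0 (t - r)]
  refine ⟨sSup S, le_csSup hS (mem_insert _ _), fun x hx => ?_⟩
  rcases lt_or_ge (a x) b with hxb | hbx
  · have := le_csSup hS (mem_insert_of_mem _ ⟨x, ⟨hx, hxb⟩, rfl⟩)
    rw [div_le_iff₀ (sub_pos.2 hxb)] at this
    linarith
  have htx : t ≤ f x := ht x (subset_convexHull ℝ X hx) hbx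
  suffices sSup S * (a x - b) ≤ f x - t by linarith
  rcases (sub_nonneg.2 hbx).eq_or_lt with hx0 | hx0
  · rw [← hx0, mul_zero]; linarith
  rw [← le_div_iff₀ hx0]
  refine csSup_le (insert_nonempty _ _) ?_
  rintro _ (rfl | ⟨w, ⟨hw, hwb⟩, rfl⟩)
  · exact div_nonneg (by linarith) hx0.le
  · rw [div_le_div_iff₀ (sub_pos.2 hwb) hx0]
    exact mul_le_mul_of_segment_crossing ht hx hw hbx hwb

theorem constrainedInf_convexHull_le_sSup_lagrangianDual {r : ℝ} (hr : ∀ x ∈ X, r ≤ f x)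
    (hint : ∀ x ∈ X, a x < b → 1 ≤ b - a x) :
    constrainedInf (convexHull ℝ X) f a b ≤ sSup (lagrangianDual X f a b '' Ici 0) := by
  by_contra! hlt
  obtain ⟨t, hLt, htV⟩ := EReal.lt_iff_exists_real_btwn.1 hlt
  obtain ⟨lam, hlam, hle⟩ := exists_nonneg_forall_le_lagrangian hr hint fun z hz hbz =>
    EReal.coe_le_coe_iff.1 (htV.le.trans (sInf_le ⟨z, ⟨hz, hbz⟩, rfl⟩))
  have htD : (t : EReal) ≤ lagrangianDual X f a b lam :=
    le_sInf (by rintro _ ⟨x, hx, rfl⟩; exact EReal.coe_le_coe_iff.2 (hle x hx))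
  exact hLt.not_ge (htD.trans (le_sSup ⟨lam, hlam, rfl⟩))

end LagrangianDuality

theorem one_le_sub_dotProduct_of_lt {ι : Type*} [Fintype ι] (a : ι → ℤ) (b : ℤ)
    {x : ι → ℝ} (hx : ∀ i, ∃ z : ℤ, x i = z) (h : (fun i => (a i : ℝ)) ⬝ᵥ x < b) :
    1 ≤ (b : ℝ) - (fun i => (a i : ℝ)) ⬝ᵥ x := by
  choose z hz using hx
  obtain rfl : x = fun i => (z i : ℝ) := funext hz
  have hcast := RingHom.map_dotProduct (Int.castRingHom ℝ) a z
  simp only [eq_intCast, Function.comp_def] at hcast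
  rw [← hcast] at h ⊢
  have : a ⬝ᵥ z < b := by exact_mod_cast h
  have : (1 : ℤ) ≤ b - a ⬝ᵥ z := by omega
  exact_mod_cast this

theorem geoffrion_single_rational_constraint {n : ℕ}
    (a : Fin n → ℤ) (b : ℤ) (c : Fin n → ℝ) (X : Set (Fin n → ℝ))
    (hX : X ⊆ {x : Fin n → ℝ | ∀ i, ∃ z : ℤ, x i = (z : ℝ)})
    (hL : ∃ r : ℝ, sInf ((fun x => ((c ⬝ᵥ x : ℝ) : EReal)) '' X) = (r : EReal)) :
    sSup ((fun lam : ℝ =>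
        sInf ((fun x =>
          ((c ⬝ᵥ x + lam * ((b : ℝ) - (fun i => (a i : ℝ)) ⬝ᵥ x) : ℝ) : EReal)) '' X)) ''
          {lam : ℝ | 0 ≤ lam}) =
      sInf ((fun x => ((c ⬝ᵥ x : ℝ) : EReal)) ''
        {x ∈ closure (convexHull ℝ X) | (b : ℝ) ≤ (fun i => (a i : ℝ)) ⬝ᵥ x}) ∧
    sInf ((fun x => ((c ⬝ᵥ x : ℝ) : EReal)) ''
        {x ∈ closure (convexHull ℝ X) | (b : ℝ) ≤ (fun i => (a i : ℝ)) ⬝ᵥ x}) =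
      sInf ((fun x => ((c ⬝ᵥ x : ℝ) : EReal)) ''
        {x ∈ convexHull ℝ X | (b : ℝ) ≤ (fun i => (a i : ℝ)) ⬝ᵥ x}) := by
  obtain ⟨r, hr⟩ := hL
  let f := dotProductBilin ℝ ℝ c
  let a' := dotProductBilin ℝ ℝ (fun i => (a i : ℝ))
  have hrf : ∀ x ∈ X, r ≤ f x := fun x hx =>
    EReal.coe_le_coe_iff.1 (hr ▸ sInf_le ⟨x, hx, rfl⟩)
  have hint : ∀ x ∈ X, a' x < b → 1 ≤ b - a' x := fun x hx =>
    one_le_sub_dotProduct_of_lt a b (hX hx)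
  have weak : sSup (lagrangianDual X f a' b '' Ici 0) ≤
      constrainedInf (closure (convexHull ℝ X)) f a' b :=
    sSup_lagrangianDual_le (LinearMap.continuous_of_finiteDimensional f)
      (LinearMap.continuous_of_finiteDimensional a')
  have closure_le : constrainedInf (closure (convexHull ℝ X)) f a' b ≤
      constrainedInf (convexHull ℝ X) f a' b := constrainedInf_anti subset_closure
  have strong := constrainedInf_convexHull_le_sSup_lagrangianDual hrf hint
  exact ⟨le_antisymm weak (closure_le.trans strong), le_antisymm closure_le (strong.trans weak)⟩
end

section
/- Let X ⊆ ℤ^n, a ∈ ℤ^n, b ∈ ℤ, c ∈ ℝ^n, and suppose every x ∈ X with a·x ≥ b satisfies a·x = b, and that L := inf { c·x : x ∈ X } is finite. Then for every λ ≥ 0, inf { c·x + λ(b − a·x) : x ∈ X } ≥ min( inf { c·x : x ∈ X, a·x = b }, λ + L ); consequently sup_{λ≥0} inf_{x∈X}(c·x + λ(b − a·x)) ≥ inf { c·x : x ∈ X, a·x = b }. -/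
open Matrix

theorem geoffrion_single_constraint_key_estimate {n : ℕ}
    (a : Fin n → ℤ) (b : ℤ) (c : Fin n → ℝ) (X : Set (Fin n → ℝ))
    (hX : X ⊆ {x : Fin n → ℝ | ∀ i, ∃ z : ℤ, x i = (z : ℝ)})
    (hbd : ∀ x ∈ X, (b : ℝ) ≤ (fun i => (a i : ℝ)) ⬝ᵥ x →
      (fun i => (a i : ℝ)) ⬝ᵥ x = (b : ℝ))
    (L : ℝ)
    (hL : sInf ((fun x => ((c ⬝ᵥ x : ℝ) : EReal)) '' X) = (L : EReal)) :
    (∀ lam : ℝ, 0 ≤ lam →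
      min (sInf ((fun x => ((c ⬝ᵥ x : ℝ) : EReal)) ''
            {x ∈ X | (fun i => (a i : ℝ)) ⬝ᵥ x = (b : ℝ)}))
          (((lam + L : ℝ) : EReal)) ≤
        sInf ((fun x =>
          ((c ⬝ᵥ x + lam * ((b : ℝ) - (fun i => (a i : ℝ)) ⬝ᵥ x) : ℝ) : EReal)) '' X)) ∧
    sInf ((fun x => ((c ⬝ᵥ x : ℝ) : EReal)) ''
        {x ∈ X | (fun i => (a i : ℝ)) ⬝ᵥ x = (b : ℝ)}) ≤
      sSup ((fun lam : ℝ =>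
        sInf ((fun x =>
          ((c ⬝ᵥ x + lam * ((b : ℝ) - (fun i => (a i : ℝ)) ⬝ᵥ x) : ℝ) : EReal)) '' X)) ''
          {lam : ℝ | 0 ≤ lam}) := by
  -- every x ∈ X has integer a·x
  have hint : ∀ x ∈ X, ∃ z : ℤ, (fun i => (a i : ℝ)) ⬝ᵥ x = (z : ℝ) := by
    intro x hx
    have h := hX hx
    choose f hf using h
    refine ⟨∑ i, a i * f i, ?_⟩
    simp only [dotProduct]
    push_cast
    exact Finset.sum_congr rfl fun i _ => by rw [hf i]
  -- each c·x ≥ L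
  have hLle : ∀ x ∈ X, (L : ℝ) ≤ c ⬝ᵥ x := by
    intro x hx
    have : (L : EReal) ≤ ((c ⬝ᵥ x : ℝ) : EReal) := by
      rw [← hL]; exact sInf_le ⟨x, hx, rfl⟩
    exact_mod_cast this
  have key : ∀ lam : ℝ, 0 ≤ lam →
      min (sInf ((fun x => ((c ⬝ᵥ x : ℝ) : EReal)) ''
            {x ∈ X | (fun i => (a i : ℝ)) ⬝ᵥ x = (b : ℝ)}))
          (((lam + L : ℝ) : EReal)) ≤
        sInf ((fun x =>
          ((c ⬝ᵥ x + lam * ((b : ℝ) - (fun i => (a i : ℝ)) ⬝ᵥ x) : ℝ) : EReal)) '' X) := by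
    intro lam hlam
    apply le_sInf
    rintro _ ⟨x, hx, rfl⟩
    dsimp only
    by_cases h : (fun i => (a i : ℝ)) ⬝ᵥ x = (b : ℝ)
    · refine le_trans (min_le_left _ _) ?_
      have : ((c ⬝ᵥ x + lam * ((b : ℝ) - (fun i => (a i : ℝ)) ⬝ᵥ x) : ℝ) : EReal)
          = ((c ⬝ᵥ x : ℝ) : EReal) := by rw [h]; norm_num
      rw [this]
      exact sInf_le ⟨x, ⟨hx, h⟩, rfl⟩
    · refine le_trans (min_le_right _ _) ?_
      obtain ⟨z, hz⟩ := hint x hx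
      have hlt : (fun i => (a i : ℝ)) ⬝ᵥ x < (b : ℝ) := by
        rcases lt_or_ge ((fun i => (a i : ℝ)) ⬝ᵥ x) (b : ℝ) with h' | h'
        · exact h'
        · exact absurd (hbd x hx h') h
      have hz1 : (1 : ℝ) ≤ (b : ℝ) - (fun i => (a i : ℝ)) ⬝ᵥ x := by
        rw [hz] at hlt ⊢
        have : z < b := by exact_mod_cast hlt
        have : z + 1 ≤ b := this
        have : ((z + 1 : ℤ) : ℝ) ≤ (b : ℝ) := by exact_mod_cast this
        push_cast at this
        linarith
      have : (lam + L : ℝ) ≤ c ⬝ᵥ x + lam * ((b : ℝ) - (fun i => (a i : ℝ)) ⬝ᵥ x) := by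
        have h1 := hLle x hx
        nlinarith [mul_le_mul_of_nonneg_left hz1 hlam]
      exact_mod_cast this
  refine ⟨key, ?_⟩
  set S := sInf ((fun x => ((c ⬝ᵥ x : ℝ) : EReal)) ''
      {x ∈ X | (fun i => (a i : ℝ)) ⬝ᵥ x = (b : ℝ)}) with hS
  by_cases hne : ({x ∈ X | (fun i => (a i : ℝ)) ⬝ᵥ x = (b : ℝ)} : Set (Fin n → ℝ)).Nonempty
  · -- S is a real number: L ≤ S and S ≤ c·x₀
    obtain ⟨x₀, hx₀⟩ := hne
    have hSub : S ≤ ((c ⬝ᵥ x₀ : ℝ) : EReal) := sInf_le ⟨x₀, hx₀, rfl⟩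
    have hSlb : (L : EReal) ≤ S := by
      apply le_sInf
      rintro _ ⟨x, hx, rfl⟩
      dsimp only
      exact_mod_cast hLle x hx.1
    have hSne : S ≠ ⊤ := fun hT => by simp [hT] at hSub
    have hSnb : S ≠ ⊥ := fun hB => by simp [hB] at hSlb
    obtain ⟨r, hr⟩ : ∃ r : ℝ, S = (r : ℝ) := by
      lift S to ℝ using ⟨hSne, hSnb⟩ with r
      exact ⟨r, rfl⟩
    have hLr : L ≤ r := by rw [hr] at hSlb; exact_mod_cast hSlb
    set lam := r - L with hlamdef
    have hlam0 : 0 ≤ lam := by simp [hlamdef]; linarith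
    have h1 := key lam hlam0
    have h2 : S ≤ min S (((lam + L : ℝ) : EReal)) := by
      rw [hr]
      apply le_min le_rfl
      have : lam + L = r := by ring
      rw [this]
    refine le_trans (le_trans h2 h1) ?_
    exact le_sSup ⟨lam, hlam0, rfl⟩
  · -- the constrained set is empty, so S = ⊤; but then inner infs ≥ lam + L → sSup = ⊤
    have hSeq : S = ⊤ := by
      rw [hS, Set.not_nonempty_iff_eq_empty.mp hne]
      simp
    rw [hSeq]
    have htop : ∀ lam : ℝ, 0 ≤ lam → ((lam + L : ℝ) : EReal) ≤
        sInf ((fun x =>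
          ((c ⬝ᵥ x + lam * ((b : ℝ) - (fun i => (a i : ℝ)) ⬝ᵥ x) : ℝ) : EReal)) '' X) := by
      intro lam hlam
      have h1 := key lam hlam
      rw [hSeq] at h1
      simpa using h1
    rw [top_le_iff]
    rw [eq_top_iff]
    apply le_sSup_iff.mpr
    intro ub hub
    by_contra hlt
    push_neg at hlt
    -- ub < ⊤, so ub < some real; pick lam with lam + L > ub
    rcases EReal.lt_iff_exists_real_btwn.mp hlt with ⟨r, hr1, _⟩
    have hlam0 : (0:ℝ) ≤ max 0 (r - L) := le_max_left _ _
    have := le_trans (htop _ hlam0) (hub ⟨_, hlam0, rfl⟩)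
    have hrle : ((max 0 (r - L) + L : ℝ) : EReal) ≤ ub := this
    have : (r : ℝ) ≤ max 0 (r - L) + L := by
      have := le_max_right 0 (r - L); linarith
    have : ((r : ℝ) : EReal) ≤ ub := le_trans (by exact_mod_cast this) hrle
    exact absurd hr1 (not_lt.mpr this)
end

section
/- Let T = { (x,y,z) ∈ ℝ³ : √2(x − y) + z ≤ 1 } and X = T ∩ ℤ³. Then closure(conv X) = T. -/
/-!
Write `f = √2 (x - y) + z`. Every point of `ℝ³` is a convex combination of the integer points of
the unit cube around it, on which `f` varies by at most `‖f‖`; so the convex hull `C` of the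
integer points with `f ≤ 1` contains the whole half-space `f ≤ 1 - ‖f‖`. Since `√2` is irrational,
`f(ℤ³) ⊇ √2 ℤ + ℤ` is dense, so any `p` with `f p < 1` has an integer point `q` with
`f p < f q ≤ 1`, and `p` lies on a segment from `q` into that deep half-space. Hence `C` contains
the open half-space `f < 1`, whose closure is `T`.
-/

open Set Metric

theorem Convex.mem_of_lt_of_setOf_le_subset {E : Type*} [AddCommGroup E] [Module ℝ E]
    {s : Set E} (hs : Convex ℝ s) (f : E →ₗ[ℝ] ℝ) {c : ℝ} (hc : {x | f x ≤ c} ⊆ s)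
    {q x : E} (hq : q ∈ s) (hx : f x < f q) : x ∈ s := by
  rcases le_or_gt (f x) c with hxc | hcx
  · exact hc hxc
  set t := (f q - f x) / (f q - c)
  have ht0 : 0 < t := div_pos (by linarith) (by linarith)
  have ht1 : t ≤ 1 := (div_le_one (by linarith)).2 (by linarith)
  have hd : f (q + t⁻¹ • (x - q)) = c := by
    simp only [t, map_add, map_smul, map_sub, smul_eq_mul, inv_div]
    field_simp [(by linarith : f q - f x ≠ 0)]
    ring
  have hx_eq : x = (1 - t) • q + t • (q + t⁻¹ • (x - q)) := by
    rw [smul_add, smul_smul, mul_inv_cancel₀ ht0.ne', one_smul]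
    module
  rw [hx_eq]
  exact hs hq (hc hd.le) (by linarith) ht0.le (by ring)

theorem StrongDual.closure_setOf_lt {E : Type*} [AddCommGroup E] [TopologicalSpace E]
    [IsTopologicalAddGroup E] [Module ℝ E] [ContinuousSMul ℝ E]
    (f : StrongDual ℝ E) (hf : f ≠ 0) (c : ℝ) :
    closure {x | f x < c} = {x | f x ≤ c} := by
  change closure (f ⁻¹' Iio c) = f ⁻¹' Iic c
  rw [← closure_Iio, (f.isOpenMap_of_ne_zero hf).preimage_closure_eq_closure_preimage f.continuous]

theorem mem_convexHull_range_intCast_inter_closedBall (r : ℝ) :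
    r ∈ convexHull ℝ (range ((↑) : ℤ → ℝ) ∩ closedBall r 1) := by
  have hfloor : (⌊r⌋ : ℝ) ≤ r := Int.floor_le r
  have hfloor_add_one : r < ⌊r⌋ + 1 := Int.lt_floor_add_one r
  refine convexHull_mono (s := ({(⌊r⌋ : ℝ), (⌊r⌋ : ℝ) + 1} : Set ℝ)) ?_ ?_
  · refine pair_subset_iff.2 ⟨⟨⟨⌊r⌋, rfl⟩, ?_⟩, ⟨⟨⌊r⌋ + 1, by push_cast; rfl⟩, ?_⟩⟩ <;>
      rw [mem_closedBall, Real.dist_eq, abs_le] <;> constructor <;> linarith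
  · rw [convexHull_pair, segment_eq_Icc (by linarith)]
    exact ⟨hfloor, hfloor_add_one.le⟩

theorem Prod.mk_mem_convexHull_inter_closedBall {E F : Type*}
    [AddCommGroup E] [Module ℝ E] [PseudoMetricSpace E]
    [AddCommGroup F] [Module ℝ F] [PseudoMetricSpace F]
    {s : Set E} {t : Set F} {x : E} {y : F} {r : ℝ}
    (hx : x ∈ convexHull ℝ (s ∩ closedBall x r)) (hy : y ∈ convexHull ℝ (t ∩ closedBall y r)) :
    (x, y) ∈ convexHull ℝ (s ×ˢ t ∩ closedBall (x, y) r) := by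
  rw [← closedBall_prod_same, prod_inter_prod, convexHull_prod]
  exact ⟨hx, hy⟩

def intPoints : Set (ℝ × ℝ × ℝ) :=
  range ((↑) : ℤ → ℝ) ×ˢ range ((↑) : ℤ → ℝ) ×ˢ range ((↑) : ℤ → ℝ)

theorem mem_convexHull_intPoints_inter_closedBall (p : ℝ × ℝ × ℝ) :
    p ∈ convexHull ℝ (intPoints ∩ closedBall p 1) :=
  Prod.mk_mem_convexHull_inter_closedBall (mem_convexHull_range_intCast_inter_closedBall _)
    (Prod.mk_mem_convexHull_inter_closedBall (mem_convexHull_range_intCast_inter_closedBall _)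
      (mem_convexHull_range_intCast_inter_closedBall _))

theorem setOf_le_sub_norm_subset_convexHull_inter_intPoints (f : StrongDual ℝ (ℝ × ℝ × ℝ))
    (c : ℝ) : {x | f x ≤ c - ‖f‖} ⊆ convexHull ℝ ({x | f x ≤ c} ∩ intPoints) := by
  intro p hp
  refine convexHull_mono ?_ (mem_convexHull_intPoints_inter_closedBall p)
  rintro x ⟨hx, hxp⟩
  have hfx : f (x - p) ≤ ‖f‖ :=
    calc f (x - p) ≤ ‖f‖ * ‖x - p‖ := (le_abs_self _).trans (f.le_opNorm _)
      _ ≤ ‖f‖ * 1 := by gcongr; rwa [← dist_eq_norm, ← mem_closedBall]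
      _ = ‖f‖ := mul_one _
  rw [map_sub] at hfx
  exact ⟨show f x ≤ c by linarith [show f p ≤ c - ‖f‖ from hp], hx⟩

theorem closure_convexHull_setOf_le_inter_intPoints (f : StrongDual ℝ (ℝ × ℝ × ℝ)) (hf : f ≠ 0)
    (hdense : Dense (f '' intPoints)) (c : ℝ) :
    closure (convexHull ℝ ({x | f x ≤ c} ∩ intPoints)) = {x | f x ≤ c} := by
  have hT_convex : Convex ℝ {x | f x ≤ c} := convex_halfSpace_le f.toLinearMap.isLinear c
  have hT_closed : IsClosed {x | f x ≤ c} := isClosed_le f.continuous continuous_const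
  refine (closure_minimal (convexHull_min inter_subset_left hT_convex) hT_closed).antisymm ?_
  have h_open_subset : {x | f x < c} ⊆ convexHull ℝ ({x | f x ≤ c} ∩ intPoints) := by
    intro x hx
    obtain ⟨_, ⟨q, hq, rfl⟩, hxq, hqc⟩ := hdense.exists_between hx
    exact (convex_convexHull ℝ _).mem_of_lt_of_setOf_le_subset f.toLinearMap
      (setOf_le_sub_norm_subset_convexHull_inter_intPoints f c)
      (subset_convexHull ℝ _ ⟨hqc.le, hq⟩) hxq
  calc {x | f x ≤ c} = closure {x | f x < c} := (f.closure_setOf_lt hf c).symm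
    _ ⊆ closure (convexHull ℝ ({x | f x ≤ c} ∩ intPoints)) := closure_mono h_open_subset

noncomputable def tiltedForm (a : ℝ) : StrongDual ℝ (ℝ × ℝ × ℝ) :=
  a • (ContinuousLinearMap.fst ℝ ℝ (ℝ × ℝ) -
      (ContinuousLinearMap.fst ℝ ℝ ℝ).comp (ContinuousLinearMap.snd ℝ ℝ (ℝ × ℝ))) +
    (ContinuousLinearMap.snd ℝ ℝ ℝ).comp (ContinuousLinearMap.snd ℝ ℝ (ℝ × ℝ))

@[simp]
theorem tiltedForm_apply (a : ℝ) (p : ℝ × ℝ × ℝ) : tiltedForm a p = a * (p.1 - p.2.1) + p.2.2 :=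
  rfl

theorem tiltedForm_ne_zero (a : ℝ) : tiltedForm a ≠ 0 := fun h => by
  simpa using congrArg (· ((0, 0, 1) : ℝ × ℝ × ℝ)) h

theorem Irrational.dense_tiltedForm_image_intPoints {a : ℝ} (ha : Irrational a) :
    Dense (tiltedForm a '' intPoints) := by
  refine (dense_addSubgroupClosure_pair_iff.2 (by rwa [div_one] : Irrational (a / 1))).mono ?_
  intro z hz
  obtain ⟨m, n, rfl⟩ := AddSubgroup.mem_closure_pair.1 hz
  exact ⟨(m, 0, n), ⟨⟨m, rfl⟩, ⟨0, Int.cast_zero⟩, ⟨n, rfl⟩⟩, by simp [mul_comm]⟩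

theorem irrational_halfspace_closed_convexHull
    (T X : Set (ℝ × ℝ × ℝ))
    (hT : T = {p : ℝ × ℝ × ℝ | Real.sqrt 2 * (p.1 - p.2.1) + p.2.2 ≤ 1})
    (hX : X = T ∩ {p : ℝ × ℝ × ℝ | ∃ a b c : ℤ, p = ((a : ℝ), (b : ℝ), (c : ℝ))}) :
    closure (convexHull ℝ X) = T := by
  have hT' : T = {p | tiltedForm (Real.sqrt 2) p ≤ 1} := by simp [hT]
  have hZ : {p : ℝ × ℝ × ℝ | ∃ a b c : ℤ, p = ((a : ℝ), (b : ℝ), (c : ℝ))} = intPoints := by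
    ext ⟨x, y, z⟩
    simp [intPoints, eq_comm]
  rw [hX, hZ, hT']
  exact closure_convexHull_setOf_le_inter_intPoints _ (tiltedForm_ne_zero _)
    irrational_sqrt_two.dense_tiltedForm_image_intPoints 1
end
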